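/- arXiv:0712.4096 — 15 statements merged into one kernel-verified Lean document; each statement's English description precedes it below -/
import Mathlib

section
/- Let b_1 ≥ 1 and b_2 ≥ 2 be integers such that gcd(b_2, 2) = 1, gcd(b_2, 2^{b_1} - 1) = 1, and gcd(φ(b_2), 2^{b_1} - 1) = 1, where φ is Euler's totient function. Consider the polynomial e(X) = 1 + X + X^2 + ... + X^{b_2-1} over the finite field F = GF(2^{b_1}). Then: (i) e is squarefree and not divisible by X; (ii) the least positive integer h such that e(X) divides X^h - 1 equals b_2 (so the period of e is coprime to 2^{b_1} - 1); and (iii) the degree over F of the splitting field of e equals the multiplicative order of 2^{b_1} modulo b_2, and in particular this degree is coprime to 2^{b_1} - 1. -/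
/-!
Write `q = 2^b₁`, `n = b₂` and `e = 1 + X + ⋯ + X^(n-1)`, so that `e · (X - 1) = X^n - 1`.
As `n` is odd, `X^n - 1` is separable over `F`, hence `e` is squarefree; and `X - 1` is coprime
to `e` because `e(1) = n ≠ 0`, so `e ∣ X^h - 1` forces `X^n - 1 ∣ X^h - 1` and `n ≤ h`.

The splitting field `K` of `e` is generated by `n`-th roots of unity, one of which is a primitive
`n`-th root `ζ` (a root of the cyclotomic factor `Φₙ ∣ e`). Thus the `k`-th power of the
Frobenius `x ↦ x^q` of `K/F` is trivial iff `ζ^(q^k) = ζ` iff `n ∣ q^k - 1`. Since `[K : F]` is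
the order of the Frobenius, it is the order of `q` modulo `n`, which divides `φ(n)`.
-/

open Polynomial Finset

section GeomSum

variable {R : Type*} [CommRing R]

theorem geomSum_X_mul_X_sub_one (n : ℕ) :
    (∑ i ∈ range n, (X : R[X]) ^ i) * (X - 1) = X ^ n - 1 :=
  geom_sum_mul X n

theorem not_X_dvd_geomSum_X [Nontrivial R] {n : ℕ} (hn : 0 < n) :
    ¬ X ∣ ∑ i ∈ range n, (X : R[X]) ^ i := by
  simp [X_dvd_iff, coeff_zero_eq_eval_zero, eval_finsetSum, zero_pow_eq, hn]

theorem eval_one_geomSum_X (n : ℕ) : (∑ i ∈ range n, (X : R[X]) ^ i).eval 1 = n := by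
  simp [eval_finsetSum]

end GeomSum

section Field

variable {K : Type*} [Field K] {n : ℕ}

theorem squarefree_geomSum_X (hn : (n : K) ≠ 0) : Squarefree (∑ i ∈ range n, (X : K[X]) ^ i) :=
  (X_pow_sub_one_separable_iff.mpr hn).squarefree.squarefree_of_dvd
    (Dvd.intro _ (geomSum_X_mul_X_sub_one n))

theorem isCoprime_X_sub_one_geomSum_X (hn : (n : K) ≠ 0) :
    IsCoprime (X - 1) (∑ i ∈ range n, (X : K[X]) ^ i) := by
  rw [← C_1, (irreducible_X_sub_C 1).coprime_iff_not_dvd, dvd_iff_isRoot, IsRoot,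
    eval_one_geomSum_X]
  exact hn

theorem X_pow_sub_one_dvd_of_geomSum_X_dvd (hn : (n : K) ≠ 0) {p : K[X]}
    (h : ∑ i ∈ range n, (X : K[X]) ^ i ∣ p) (h1 : X - 1 ∣ p) : X ^ n - 1 ∣ p := by
  rw [← geomSum_X_mul_X_sub_one, mul_comm]
  exact (isCoprime_X_sub_one_geomSum_X hn).mul_dvd h1 h

theorem isLeast_geomSum_X_dvd_X_pow_sub_one (hn : (n : K) ≠ 0) :
    IsLeast {h : ℕ | 0 < h ∧ ∑ i ∈ range n, (X : K[X]) ^ i ∣ X ^ h - 1} n := by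
  refine ⟨⟨Nat.pos_of_ne_zero (by rintro rfl; simp at hn),
    Dvd.intro _ (geomSum_X_mul_X_sub_one n)⟩, fun h ⟨hpos, hdvd⟩ => ?_⟩
  have hdvd' := X_pow_sub_one_dvd_of_geomSum_X_dvd hn hdvd
    (by simpa using sub_dvd_pow_sub_pow (X : K[X]) 1 h)
  rw [← C_1] at hdvd'
  simpa only [natDegree_X_pow_sub_C] using
    natDegree_le_of_dvd hdvd' (X_pow_sub_C_ne_zero hpos 1)

end Field

section Roots

variable {F K : Type*} [Field F] [Field K] [Algebra F K] {n : ℕ}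

theorem geomSum_X_ne_zero (hn : 0 < n) : ∑ i ∈ range n, (X : F[X]) ^ i ≠ 0 := fun h =>
  not_X_dvd_geomSum_X hn (h ▸ dvd_zero X)

theorem pow_eq_one_of_mem_rootSet_geomSum_X {x : K}
    (hx : x ∈ (∑ i ∈ range n, (X : F[X]) ^ i).rootSet K) : x ^ n = 1 := by
  have h := congr_arg (aeval x) (geomSum_X_mul_X_sub_one (R := F) n)
  rw [map_mul, (mem_rootSet.mp hx).2, zero_mul] at h
  simpa [eq_comm (a := (0 : K)), sub_eq_zero] using h

theorem exists_isPrimitiveRoot_mem_rootSet_geomSum_X (hn : 2 ≤ n) (hnK : (n : K) ≠ 0)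
    (hsplit : Splits ((∑ i ∈ range n, (X : F[X]) ^ i).map (algebraMap F K))) :
    ∃ ζ ∈ (∑ i ∈ range n, (X : F[X]) ^ i).rootSet K, IsPrimitiveRoot ζ n := by
  have : NeZero (n : K) := ⟨hnK⟩
  have hmap : (∑ i ∈ range n, (X : F[X]) ^ i).map (algebraMap F K) =
      ∑ i ∈ range n, (X : K[X]) ^ i := by
    simp [Polynomial.map_sum]
  have hcyc : cyclotomic n K ∣ ∑ i ∈ range n, (X : K[X]) ^ i :=
    cyclotomic_dvd_geom_sum_of_dvd K dvd_rfl (by omega)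
  rw [hmap] at hsplit
  obtain ⟨ζ, hζ⟩ := (hsplit.of_dvd (geomSum_X_ne_zero (by omega)) hcyc).exists_eval_eq_zero
    (by rw [degree_cyclotomic]; exact_mod_cast (Nat.totient_pos.mpr (by omega)).ne')
  refine ⟨ζ, mem_rootSet.mpr ⟨geomSum_X_ne_zero (by omega), ?_⟩, isRoot_cyclotomic_iff.mp hζ⟩
  rw [aeval_def, eval₂_eq_eval_map, hmap]
  exact eval_eq_zero_of_dvd_of_eval_eq_zero hcyc hζ

theorem forall_mem_rootSet_geomSum_X_pow_succ_eq_iff {ζ : K}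
    (hζ : ζ ∈ (∑ i ∈ range n, (X : F[X]) ^ i).rootSet K) (hprim : IsPrimitiveRoot ζ n) (m : ℕ) :
    (∀ x ∈ (∑ i ∈ range n, (X : F[X]) ^ i).rootSet K, x ^ (m + 1) = x) ↔ n ∣ m := by
  refine ⟨fun h => hprim.pow_eq_one_iff_dvd m |>.mp ?_, fun ⟨t, ht⟩ x hx => ?_⟩
  · have hζ0 : ζ ≠ 0 := hprim.ne_zero (by rintro rfl; simp at hζ)
    simpa [pow_succ, hζ0] using h ζ hζ
  · rw [pow_succ, ht, pow_mul, pow_eq_one_of_mem_rootSet_geomSum_X hx, one_pow, one_mul]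

end Roots

theorem ZMod.natCast_eq_one_iff_dvd_sub_one {m : ℕ} (hm : 1 ≤ m) (n : ℕ) :
    (m : ZMod n) = 1 ↔ n ∣ m - 1 := by
  rw [← Nat.cast_one, ZMod.natCast_eq_natCast_iff, Nat.ModEq.comm, Nat.modEq_iff_dvd' hm]

theorem ZMod.orderOf_natCast_dvd_totient {a n : ℕ} (h : a.Coprime n) :
    orderOf (a : ZMod n) ∣ n.totient := by
  refine orderOf_dvd_of_pow_eq_one ?_
  exact_mod_cast (ZMod.natCast_eq_natCast_iff _ _ _).mpr (Nat.ModEq.pow_totient h)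

open FiniteField in
theorem finrank_splittingField_geomSum_X {F : Type*} [Field F] [Fintype F] {n : ℕ} (hn : 2 ≤ n)
    (hnF : (n : F) ≠ 0) :
    Module.finrank F (∑ i ∈ range n, (X : F[X]) ^ i).SplittingField =
      orderOf (Fintype.card F : ZMod n) := by
  set e : F[X] := ∑ i ∈ range n, X ^ i
  set q := Fintype.card F
  have : Finite e.SplittingField := Module.finite_of_finite F
  obtain ⟨ζ, hζ, hprim⟩ := exists_isPrimitiveRoot_mem_rootSet_geomSum_X hn
    (by simpa using (algebraMap F e.SplittingField).injective.ne hnF) (SplittingField.splits e)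
  rw [← orderOf_frobeniusAlgHom F e.SplittingField]
  refine orderOf_eq_orderOf_iff.mpr fun k => ?_
  have hqk : 1 ≤ q ^ k := Nat.one_le_pow _ _ Fintype.card_pos
  have frob_pow (x) : (frobeniusAlgHom F e.SplittingField ^ k) x = x ^ (q ^ k - 1 + 1) := by
    rw [AlgHom.coe_pow, coe_frobeniusAlgHom, pow_iterate, Nat.sub_add_cancel hqk]
  calc frobeniusAlgHom F e.SplittingField ^ k = 1
      ↔ ∀ x ∈ e.rootSet e.SplittingField, x ^ (q ^ k - 1 + 1) = x := by
        refine ⟨fun h x _ => by rw [← frob_pow, h, AlgHom.one_apply], fun h => ?_⟩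
        exact AlgHom.ext_of_adjoin_eq_top (SplittingField.adjoin_rootSet e)
          fun x hx => (frob_pow x).trans (h x hx)
    _ ↔ n ∣ q ^ k - 1 := forall_mem_rootSet_geomSum_X_pow_succ_eq_iff hζ hprim _
    _ ↔ (q : ZMod n) ^ k = 1 := by
        rw [← Nat.cast_pow, ZMod.natCast_eq_one_iff_dvd_sub_one hqk]

/-- Let `b₁ ≥ 1`, `b₂ ≥ 2` with `gcd(b₂,2) = 1`, `gcd(b₂, 2^b₁ - 1) = 1`, and
`gcd(φ(b₂), 2^b₁ - 1) = 1`.  Consider `e(X) = 1 + X + ⋯ + X^(b₂-1)` over `F = GF(2^b₁)`.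
Then: (i) `e` is squarefree and not divisible by `X`; (ii) the least positive `h` with
`e ∣ X^h - 1` (the period of `e`) is `b₂`, which is coprime to `2^b₁ - 1`; and
(iii) the degree over `F` of the splitting field of `e` equals the multiplicative order
of `2^b₁` modulo `b₂`, and in particular this degree is coprime to `2^b₁ - 1`. -/
theorem stmt1 (b₁ b₂ : ℕ) (hb₁ : 1 ≤ b₁) (hb₂ : 2 ≤ b₂)
    (hc1 : Nat.gcd b₂ 2 = 1) (hc2 : Nat.gcd b₂ (2 ^ b₁ - 1) = 1)
    (hc3 : Nat.gcd (Nat.totient b₂) (2 ^ b₁ - 1) = 1) :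
    let F := GaloisField 2 b₁
    let e : F[X] := ∑ i ∈ Finset.range b₂, X ^ i
    (Squarefree e ∧ ¬ (X : F[X]) ∣ e) ∧
    (IsLeast {h : ℕ | 0 < h ∧ e ∣ X ^ h - 1} b₂ ∧ Nat.Coprime b₂ (2 ^ b₁ - 1)) ∧
    (Module.finrank F e.SplittingField = orderOf ((2 : ZMod b₂) ^ b₁) ∧
     Nat.Coprime (Module.finrank F e.SplittingField) (2 ^ b₁ - 1)) := by
  intro F e
  have : Fintype F := Fintype.ofFinite F
  have hcard : Fintype.card F = 2 ^ b₁ := by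
    rw [← Nat.card_eq_fintype_card, GaloisField.card 2 b₁ (by omega)]
  have h2b₂ : Nat.Coprime 2 b₂ := Nat.Coprime.symm hc1
  have hb₂F : (b₂ : F) ≠ 0 := by
    rw [Ne, CharP.cast_eq_zero_iff F 2]
    exact Nat.prime_two.coprime_iff_not_dvd.mp h2b₂
  have hrank : Module.finrank F e.SplittingField = orderOf ((2 : ZMod b₂) ^ b₁) := by
    rw [finrank_splittingField_geomSum_X hb₂ hb₂F, hcard]
    push_cast
    rfl
  refine ⟨⟨squarefree_geomSum_X hb₂F, not_X_dvd_geomSum_X (by omega)⟩,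
    ⟨isLeast_geomSum_X_dvd_X_pow_sub_one hb₂F, hc2⟩, hrank, ?_⟩
  rw [hrank]
  refine Nat.Coprime.coprime_dvd_left ?_ hc3
  exact_mod_cast ZMod.orderOf_natCast_dvd_totient (h2b₂.pow_left b₁)
end

section
/- Let F be a field, b ≥ 2 and n ≥ b integers, e(X) = 1 + X + ... + X^{b-1} ∈ F[X], and let p(X) ∈ F[X] be an irreducible polynomial of degree strictly greater than b. Assume the code generated by e(X)p(X) corrects every burst of length b, i.e.: for all positions 0 ≤ i, j ≤ n - b and all vectors u, v ∈ F^b, if e(X)p(X) divides Σ_{k=0}^{b-1} u_k X^{i+k} - Σ_{k=0}^{b-1} v_k X^{j+k}, then Σ_{k=0}^{b-1} u_k X^{i+k} = Σ_{k=0}^{b-1} v_k X^{j+k}. Then for every pattern e_0, ..., e_{b-1} ∈ F and all positions 0 ≤ i, j ≤ n - b, defining h_i(X) = Σ_{k=0}^{b-1} e_{(i+k) mod b} · X^{i+k}, if h_i ≠ h_j then p(X) does not divide h_i(X) - h_j(X). (In other words, the code {f ∈ F[X] : p(X) | f, deg f < n} is a b-burst-locator code: it determines the first position of a burst given up to a cyclic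 permutation.) -/
open Polynomial

/-- Let `F` be a field, `b ≥ 2`, `n ≥ b`, `e(X) = 1 + X + ⋯ + X^(b-1)` and `p`
irreducible of degree `> b`.  Assume the code generated by `e·p` corrects every burst of
length `b` (two bursts of length `b` placed at positions `i, j ≤ n - b` whose difference
is divisible by `e·p` must be equal).  Then the code generated by `p` is a
`b`-burst-locator code: for every pattern `e₀, …, e_{b-1}` and positions
`i, j ≤ n - b`, with `h_i(X) = Σ_{k<b} e_{(i+k) mod b} X^{i+k}`, if `h_i ≠ h_j`
then `p ∤ h_i - h_j`. -/
theorem stmt3 (F : Type*) [Field F] (b n : ℕ) (hb : 2 ≤ b) (hn : b ≤ n)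
    (p : F[X]) (hp : Irreducible p) (hdeg : b < p.natDegree)
    (e : F[X]) (he : e = ∑ i ∈ Finset.range b, X ^ i)
    (hcorr : ∀ i j : ℕ, i ≤ n - b → j ≤ n - b → ∀ u v : Fin b → F,
      (e * p) ∣ (∑ k : Fin b, C (u k) * X ^ (i + (k : ℕ))) -
                 (∑ k : Fin b, C (v k) * X ^ (j + (k : ℕ))) →
      (∑ k : Fin b, C (u k) * X ^ (i + (k : ℕ))) =
        (∑ k : Fin b, C (v k) * X ^ (j + (k : ℕ)))) :
    ∀ (pat : ℕ → F) (i j : ℕ), i ≤ n - b → j ≤ n - b →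
      (∑ k ∈ Finset.range b, C (pat ((i + k) % b)) * X ^ (i + k)) ≠
        (∑ k ∈ Finset.range b, C (pat ((j + k) % b)) * X ^ (j + k)) →
      ¬ p ∣ (∑ k ∈ Finset.range b, C (pat ((i + k) % b)) * X ^ (i + k)) -
            (∑ k ∈ Finset.range b, C (pat ((j + k) % b)) * X ^ (j + k)) := by
  intro pat i j hi hj hne hdvd
  have hb0 : 0 < b := by omega
  -- arithmetic helpers
  have L2 : ∀ m a : ℕ, a < b → (m + (a + (b - m % b)) % b) % b = a := by
    intro m a ha
    have hrb : m % b < b := Nat.mod_lt _ hb0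
    have hdm : b * (m / b) + m % b = m := Nat.div_add_mod m b
    rw [Nat.add_mod_mod]
    have : m + (a + (b - m % b)) = b * (m / b) + (b + a) := by omega
    rw [this, Nat.mul_add_mod, Nat.add_mod_left, Nat.mod_eq_of_lt ha]
  have L1 : ∀ m a : ℕ, a < b → ((m + a) % b + (b - m % b)) % b = a := by
    intro m a ha
    have hrb : m % b < b := Nat.mod_lt _ hb0
    have hdm : b * (m / b) + m % b = m := Nat.div_add_mod m b
    rw [Nat.mod_add_mod]
    have : m + a + (b - m % b) = b * (m / b) + (b + a) := by omega
    rw [this, Nat.mul_add_mod, Nat.add_mod_left, Nat.mod_eq_of_lt ha]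
  -- step 1: X^b - 1 divides h_m - s for every m
  have key : ∀ m : ℕ, ((X : F[X]) ^ b - 1) ∣
      (∑ k ∈ Finset.range b, C (pat ((m + k) % b)) * X ^ (m + k)) -
      (∑ k ∈ Finset.range b, C (pat k) * X ^ k) := by
    intro m
    have hre : (∑ k ∈ Finset.range b, C (pat k) * X ^ k : F[X]) =
        ∑ k ∈ Finset.range b, C (pat ((m + k) % b)) * X ^ ((m + k) % b) := by
      refine Finset.sum_nbij' (fun k => (k + (b - m % b)) % b) (fun k => (m + k) % b) ?_ ?_ ?_ ?_ ?_
      · intro a ha; exact Finset.mem_range.mpr (Nat.mod_lt _ hb0)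
      · intro a ha; exact Finset.mem_range.mpr (Nat.mod_lt _ hb0)
      · intro a ha; exact L2 m a (Finset.mem_range.mp ha)
      · intro a ha; exact L1 m a (Finset.mem_range.mp ha)
      · intro a ha
        rw [L2 m a (Finset.mem_range.mp ha)]
    rw [hre, ← Finset.sum_sub_distrib]
    refine Finset.dvd_sum fun k _ => ?_
    rw [← mul_sub]
    refine Dvd.dvd.mul_left ?_ _
    set r := (m + k) % b with hr
    set q := (m + k) / b with hq
    have hmk : m + k = b * q + r := (Nat.div_add_mod _ _).symm
    rw [hmk, pow_add, pow_mul]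
    have h1 : ((X : F[X]) ^ b) ^ q * X ^ r - X ^ r
        = (((X : F[X]) ^ b) ^ q - 1) * X ^ r := by ring
    rw [h1]
    exact Dvd.dvd.mul_right (by simpa using sub_dvd_pow_sub_pow ((X : F[X])^b) 1 q) _
  have hdiff : ((X : F[X]) ^ b - 1) ∣
      (∑ k ∈ Finset.range b, C (pat ((i + k) % b)) * X ^ (i + k)) -
      (∑ k ∈ Finset.range b, C (pat ((j + k) % b)) * X ^ (j + k)) := by
    have := dvd_sub (key i) (key j)
    simpa using this
  -- step 2: e ∣ X^b - 1
  have he_dvd : e ∣ (X : F[X]) ^ b - 1 := by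
    rw [he]; exact ⟨X - 1, (geom_sum_mul X b).symm⟩
  have hediv := he_dvd.trans hdiff
  -- step 3: coprime
  have he_ne : e ≠ 0 := by
    intro h
    have hc : e.coeff (b - 1) = 1 := by
      rw [he, finset_sum_coeff]
      simp only [coeff_X_pow]
      rw [Finset.sum_ite_eq (Finset.range b) (b-1) (fun _ => (1:F)),
        if_pos (Finset.mem_range.mpr (by omega))]
    rw [h] at hc; simp at hc
  have hdege : e.natDegree < p.natDegree := by
    have : e.natDegree ≤ b - 1 := by
      rw [he]
      refine Polynomial.natDegree_sum_le_of_forall_le _ _ fun a ha => ?_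
      rw [natDegree_X_pow]
      exact Nat.le_pred_of_lt (Finset.mem_range.mp ha)
    omega
  have hnotdvd : ¬ p ∣ e := fun h => absurd (natDegree_le_of_dvd h he_ne) (by omega)
  have hcop : IsCoprime e p := ((hp.coprime_iff_not_dvd).mpr hnotdvd).symm
  have hep : (e * p) ∣
      (∑ k ∈ Finset.range b, C (pat ((i + k) % b)) * X ^ (i + k)) -
      (∑ k ∈ Finset.range b, C (pat ((j + k) % b)) * X ^ (j + k)) :=
    hcop.mul_dvd hediv hdvd
  -- step 4: apply hcorr
  have hfin := hcorr i j hi hj (fun k => pat ((i + (k:ℕ)) % b)) (fun k => pat ((j + (k:ℕ)) % b))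
  rw [Fin.sum_univ_eq_sum_range (fun k => C (pat ((i + k) % b)) * X ^ (i + k)) b,
      Fin.sum_univ_eq_sum_range (fun k => C (pat ((j + k) % b)) * X ^ (j + k)) b] at hfin
  exact hne (hfin hep)
end

section
/- For each 1 ≤ s ≤ D and any two positions p = (p_1,...,p_D), q = (q_1,...,q_D) ∈ ℤ^D satisfying |p_j - q_j| ≤ b_j - 1 for all 1 ≤ j ≤ D (i.e., lying in a common box of size b_1 × b_2 × ... × b_D), one has |a^s(p) - a^s(q)| ≤ B - 1. In particular, a box-error of size b_1 × ... × b_D induces in the s-th component codeword a burst of length at most B. -/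
/-- `Bprod b m = B_m = b_1 b_2 ⋯ b_m` (0-indexed: the product of the first `m` values). -/
def Bprod (b : ℕ → ℤ) (m : ℕ) : ℤ := ∏ k ∈ Finset.range m, b k

/-- The coefficient of `i_j` in the `s`-th coloring (0-indexed `s, j`):
`-B_{j-1}·B_D/B_{s-1}` for `j < s` and `B_{j-1}/B_{s-1}` for `j ≥ s`.
(All the divisions are exact.) -/
def colorCoeff (b : ℕ → ℤ) (D s j : ℕ) : ℤ :=
  if j < s then -(Bprod b j * Bprod b D / Bprod b s) else Bprod b j / Bprod b s

/-- The `s`-th coloring `a^s(i) = Σ_j colorCoeff · i_j` of `ℤ^D`. -/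
def coloring (b : ℕ → ℤ) (D s : ℕ) (p : ℕ → ℤ) : ℤ :=
  ∑ j ∈ Finset.range D, colorCoeff b D s j * p j

/-!
Write `T_j = b_s ⋯ b_{j-1}` (0-indexed), so that `B_j = B_s T_j` for `j ≥ s`. The coefficients
of `a^s` are `-B_j T_D` for `j < s` and `T_j` for `j ≥ s`, so by the triangle inequality
`|a^s(p) - a^s(q)|` is at most `T_D Σ_{j<s} B_j (b_j - 1) + Σ_{s≤j<D} T_j (b_j - 1)`.
Both sums telescope, to `T_D (B_s - 1)` and `T_D - 1`, and the total is `T_D B_s - 1 = B_D - 1`.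
-/

open Finset

theorem sum_Ico_prod_Ico_mul_sub_one {R : Type*} [CommRing R] (b : ℕ → R) {m n : ℕ}
    (h : m ≤ n) :
    ∑ j ∈ Ico m n, (∏ k ∈ Ico m j, b k) * (b j - 1) = ∏ k ∈ Ico m n, b k - 1 := by
  induction n, h using Nat.le_induction with
  | base => simp
  | succ n hmn ih => rw [sum_Ico_succ_top hmn, ih, prod_Ico_succ_top hmn]; ring

theorem sum_Bprod_mul_sub_one (b : ℕ → ℤ) (n : ℕ) :
    ∑ j ∈ range n, Bprod b j * (b j - 1) = Bprod b n - 1 := by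
  simpa only [Bprod, range_eq_Ico] using sum_Ico_prod_Ico_mul_sub_one b (Nat.zero_le n)

theorem Bprod_eq_mul_prod_Ico (b : ℕ → ℤ) {s j : ℕ} (h : s ≤ j) :
    Bprod b j = Bprod b s * ∏ k ∈ Ico s j, b k :=
  (prod_range_mul_prod_Ico b h).symm

section Coloring

variable {b : ℕ → ℤ} {D s : ℕ}

theorem colorCoeff_of_lt (hs : s ≤ D) (h0 : Bprod b s ≠ 0) {j : ℕ} (hj : j < s) :
    colorCoeff b D s j = -(Bprod b j * ∏ k ∈ Ico s D, b k) := by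
  rw [colorCoeff, if_pos hj, Bprod_eq_mul_prod_Ico b hs, mul_left_comm,
    Int.mul_ediv_cancel_left _ h0]

theorem colorCoeff_of_le (h0 : Bprod b s ≠ 0) {j : ℕ} (hj : s ≤ j) :
    colorCoeff b D s j = ∏ k ∈ Ico s j, b k := by
  rw [colorCoeff, if_neg hj.not_gt, Bprod_eq_mul_prod_Ico b hj, Int.mul_ediv_cancel_left _ h0]

theorem coloring_sub (b : ℕ → ℤ) (D s : ℕ) (p q : ℕ → ℤ) :
    coloring b D s p - coloring b D s q = coloring b D s (p - q) := by
  simp only [coloring, Pi.sub_apply, mul_sub, sum_sub_distrib]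

theorem abs_coloring_le {x : ℕ → ℤ} (hx : ∀ j < D, |x j| ≤ b j - 1) :
    |coloring b D s x| ≤ ∑ j ∈ range D, |colorCoeff b D s j| * (b j - 1) := by
  refine (abs_sum_le_sum_abs _ _).trans (sum_le_sum fun j hj => ?_)
  rw [abs_mul]
  exact mul_le_mul_of_nonneg_left (hx j (mem_range.mp hj)) (abs_nonneg _)

theorem sum_abs_colorCoeff_mul_sub_one (hb : ∀ j < D, 0 < b j) (hs : s ≤ D) :
    ∑ j ∈ range D, |colorCoeff b D s j| * (b j - 1) = Bprod b D - 1 := by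
  have prod_Ico_pos : ∀ {m n}, n ≤ D → 0 < ∏ k ∈ Ico m n, b k := fun hn =>
    prod_pos fun k hk => hb k ((mem_Ico.mp hk).2.trans_le hn)
  have Bprod_pos : ∀ {n}, n ≤ D → 0 < Bprod b n := fun hn =>
    prod_pos fun k hk => hb k ((mem_range.mp hk).trans_le hn)
  have h0 : Bprod b s ≠ 0 := (Bprod_pos hs).ne'
  set T := ∏ k ∈ Ico s D, b k
  have low : ∑ j ∈ range s, |colorCoeff b D s j| * (b j - 1) = T * (Bprod b s - 1) := by
    rw [← sum_Bprod_mul_sub_one, mul_sum]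
    refine sum_congr rfl fun j hj => ?_
    have hjs := mem_range.mp hj
    rw [colorCoeff_of_lt hs h0 hjs, abs_neg,
      abs_of_pos (mul_pos (Bprod_pos (hjs.le.trans hs)) (prod_Ico_pos le_rfl))]
    ring
  have high : ∑ j ∈ Ico s D, |colorCoeff b D s j| * (b j - 1) = T - 1 := by
    rw [← sum_Ico_prod_Ico_mul_sub_one b hs]
    refine sum_congr rfl fun j hj => ?_
    rw [colorCoeff_of_le h0 (mem_Ico.mp hj).1, abs_of_pos (prod_Ico_pos (mem_Ico.mp hj).2.le)]
  rw [← sum_range_add_sum_Ico _ hs, low, high, Bprod_eq_mul_prod_Ico b hs]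
  ring

end Coloring

theorem stmt4_general (D : ℕ) (b : ℕ → ℤ) (hb : ∀ j < D, 0 < b j)
    (s : ℕ) (hs : s < D) (p q : ℕ → ℤ)
    (hbox : ∀ j < D, |p j - q j| ≤ b j - 1) :
    |coloring b D s p - coloring b D s q| ≤ Bprod b D - 1 := by
  rw [coloring_sub, ← sum_abs_colorCoeff_mul_sub_one hb hs.le]
  exact abs_coloring_le hbox

/-- For each coloring `a^s` and any two positions lying in a common box of size
`b_1 × ⋯ × b_D`, the colors differ by at most `B - 1`, where `B = b_1 ⋯ b_D`. -/
theorem stmt4 (D : ℕ) (hD : 1 ≤ D) (b : ℕ → ℤ) (hb : ∀ j < D, 0 < b j)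
    (s : ℕ) (hs : s < D) (p q : ℕ → ℤ)
    (hbox : ∀ j < D, |p j - q j| ≤ b j - 1) :
    |coloring b D s p - coloring b D s q| ≤ Bprod b D - 1 :=
  stmt4_general D b hb s hs p q hbox
end

section
/- For each 1 ≤ s ≤ D, the s-th coloring is injective on every box of size b_1 × b_2 × ... × b_D: if p = (p_1,...,p_D) and q = (q_1,...,q_D) in ℤ^D satisfy |p_j - q_j| ≤ b_j - 1 for all 1 ≤ j ≤ D and a^s(p) = a^s(q), then p = q. -/
def Eprod (b : ℕ → ℤ) (k n : ℕ) : ℤ := ∏ i ∈ Finset.Ico k n, b i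

lemma Bprod_eq_mul_Eprod (b : ℕ → ℤ) {k n : ℕ} (h : k ≤ n) :
    Bprod b n = Bprod b k * Eprod b k n := by
  rw [Bprod, Bprod, Eprod, Finset.prod_range_mul_prod_Ico _ h]

lemma Eprod_pos (b : ℕ → ℤ) {k n : ℕ} (h : ∀ i, k ≤ i → i < n → 0 < b i) :
    0 < Eprod b k n := by
  apply Finset.prod_pos
  intro i hi
  rw [Finset.mem_Ico] at hi
  exact h i hi.1 hi.2

lemma telescope (b : ℕ → ℤ) : ∀ n k,
    (∑ j ∈ Finset.Ico k (k+n), Eprod b k j * (b j - 1)) = Eprod b k (k+n) - 1 := by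
  intro n
  induction n with
  | zero => intro k; simp [Eprod]
  | succ n ih =>
    intro k
    rw [show k + (n+1) = (k+n) + 1 from rfl, Finset.sum_Ico_succ_top (by omega), ih]
    unfold Eprod
    rw [Finset.prod_Ico_succ_top (by omega)]
    ring

lemma mixedRadix (b d : ℕ → ℤ) : ∀ n k, (∀ j, k ≤ j → j < k + n → 0 < b j) →
    (∀ j, k ≤ j → j < k + n → |d j| ≤ b j - 1) →
    (∑ j ∈ Finset.Ico k (k+n), Eprod b k j * d j) = 0 →
    ∀ j, k ≤ j → j < k + n → d j = 0 := by
  intro n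
  induction n with
  | zero => intro k _ _ _ j h1 h2; omega
  | succ n ih =>
    intro k hbpos hbd hsum
    have hsplit : (∑ j ∈ Finset.Ico k (k+(n+1)), Eprod b k j * d j)
        = Eprod b k k * d k + ∑ j ∈ Finset.Ico (k+1) (k+(n+1)), Eprod b k j * d j := by
      rw [Finset.sum_eq_sum_Ico_succ_bot (by omega)]
    have hEkk : Eprod b k k = 1 := by simp [Eprod]
    have hfac : ∀ j ∈ Finset.Ico (k+1) (k+(n+1)), Eprod b k j * d j
        = b k * (Eprod b (k+1) j * d j) := by
      intro j hj
      rw [Finset.mem_Ico] at hj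
      rw [Eprod, Finset.prod_eq_prod_Ico_succ_bot (by omega), Eprod]
      ring
    rw [hsplit, hEkk, one_mul, Finset.sum_congr rfl hfac, ← Finset.mul_sum] at hsum
    set S := ∑ j ∈ Finset.Ico (k+1) (k+(n+1)), Eprod b (k+1) j * d j with hS
    have hbk : 0 < b k := hbpos k le_rfl (by omega)
    have hdk : |d k| ≤ b k - 1 := hbd k le_rfl (by omega)
    have hSzero : S = 0 := by
      by_contra hne
      have h1 : 1 ≤ |S| := Int.one_le_abs hne
      have : b k ≤ |d k| := by
        have : |d k| = b k * |S| := by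
          rw [show d k = -(b k * S) by linarith, abs_neg, abs_mul, abs_of_pos hbk]
        nlinarith
      omega
    have hdk0 : d k = 0 := by rw [hSzero] at hsum; linarith
    have hsum' : ∑ j ∈ Finset.Ico (k+1) ((k+1)+n), Eprod b (k+1) j * d j = 0 := by
      rw [show (k+1)+n = k+(n+1) by omega]; exact hSzero
    have := ih (k+1) (fun j h1 h2 => hbpos j (by omega) (by omega))
      (fun j h1 h2 => hbd j (by omega) (by omega)) hsum'
    intro j h1 h2
    rcases Nat.eq_or_lt_of_le h1 with h | h
    · rw [← h]; exact hdk0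
    · exact this j h (by omega)

/-- Each coloring `a^s` is injective on every box of size `b_1 × ⋯ × b_D`: if `p, q`
satisfy `|p_j - q_j| ≤ b_j - 1` for all `j` and `a^s(p) = a^s(q)`, then `p = q`
(in all `D` relevant coordinates). -/
theorem stmt5 (D : ℕ) (hD : 1 ≤ D) (b : ℕ → ℤ) (hb : ∀ j < D, 0 < b j)
    (s : ℕ) (hs : s < D) (p q : ℕ → ℤ)
    (hbox : ∀ j < D, |p j - q j| ≤ b j - 1)
    (heq : coloring b D s p = coloring b D s q) :
    ∀ j < D, p j = q j := by
  set d : ℕ → ℤ := fun j => p j - q j with hd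
  have hBspos : 0 < Bprod b s := by
    apply Finset.prod_pos; intro i hi
    exact hb i (lt_of_lt_of_le (Finset.mem_range.mp hi) (le_of_lt hs))
  have hBsne : Bprod b s ≠ 0 := ne_of_gt hBspos
  -- coefficients
  have hcoefflt : ∀ j, j < s → colorCoeff b D s j = -(Eprod b s D * Bprod b j) := by
    intro j hj
    rw [colorCoeff, if_pos hj, Bprod_eq_mul_Eprod b (le_of_lt hs),
        show Bprod b j * (Bprod b s * Eprod b s D) = Bprod b s * (Eprod b s D * Bprod b j) by ring,
        Int.mul_ediv_cancel_left _ hBsne]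
  have hcoeffge : ∀ j, s ≤ j → j < D → colorCoeff b D s j = Eprod b s j := by
    intro j h1 h2
    rw [colorCoeff, if_neg (by omega), Bprod_eq_mul_Eprod b h1,
        Int.mul_ediv_cancel_left _ hBsne]
  -- the difference equation
  have hsum0 : ∑ j ∈ Finset.range D, colorCoeff b D s j * d j = 0 := by
    have : coloring b D s p - coloring b D s q = 0 := by rw [heq]; ring
    rw [coloring, coloring, ← Finset.sum_sub_distrib] at this
    rw [← this]
    apply Finset.sum_congr rfl
    intro j _; simp [hd]; ring
  set M : ℤ := ∑ j ∈ Finset.Ico 0 s, Eprod b 0 j * d j with hM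
  have hsplit : ∑ j ∈ Finset.Ico s D, Eprod b s j * d j = Eprod b s D * M := by
    have h1 : ∑ j ∈ Finset.range D, colorCoeff b D s j * d j
        = (∑ j ∈ Finset.Ico 0 s, colorCoeff b D s j * d j)
          + ∑ j ∈ Finset.Ico s D, colorCoeff b D s j * d j := by
      rw [Finset.range_eq_Ico, ← Finset.sum_Ico_consecutive _ (Nat.zero_le s) (le_of_lt hs)]
    have h2 : ∑ j ∈ Finset.Ico 0 s, colorCoeff b D s j * d j
        = -(Eprod b s D * M) := by
      rw [hM, Finset.mul_sum, ← Finset.sum_neg_distrib]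
      apply Finset.sum_congr rfl
      intro j hj
      rw [Finset.mem_Ico] at hj
      rw [hcoefflt j hj.2]
      have : Eprod b 0 j = Bprod b j := by
        rw [Eprod, Bprod, Finset.range_eq_Ico]
      rw [this]; ring
    have h3 : ∑ j ∈ Finset.Ico s D, colorCoeff b D s j * d j
        = ∑ j ∈ Finset.Ico s D, Eprod b s j * d j := by
      apply Finset.sum_congr rfl
      intro j hj
      rw [Finset.mem_Ico] at hj
      rw [hcoeffge j hj.1 hj.2]
    rw [h1, h2, h3] at hsum0
    linarith
  -- bound the right sum
  have hbound : |∑ j ∈ Finset.Ico s D, Eprod b s j * d j| ≤ Eprod b s D - 1 := by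
    calc |∑ j ∈ Finset.Ico s D, Eprod b s j * d j|
        ≤ ∑ j ∈ Finset.Ico s D, |Eprod b s j * d j| := Finset.abs_sum_le_sum_abs _ _
      _ ≤ ∑ j ∈ Finset.Ico s D, Eprod b s j * (b j - 1) := by
          apply Finset.sum_le_sum
          intro j hj
          rw [Finset.mem_Ico] at hj
          have hEpos : 0 < Eprod b s j :=
            Eprod_pos b (fun i h1 h2 => hb i (by omega))
          rw [abs_mul, abs_of_pos hEpos]
          exact mul_le_mul_of_nonneg_left (hbox j hj.2) (le_of_lt hEpos)
      _ = Eprod b s D - 1 := by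
          have := telescope b (D - s) s
          rw [show s + (D - s) = D by omega] at this
          exact this
  have hEDpos : 0 < Eprod b s D := Eprod_pos b (fun i h1 h2 => hb i h2)
  have hM0 : M = 0 := by
    by_contra hne
    have h1 : 1 ≤ |M| := Int.one_le_abs hne
    have : Eprod b s D ≤ |Eprod b s D * M| := by
      rw [abs_mul, abs_of_pos hEDpos]; nlinarith
    rw [hsplit] at hbound
    omega
  have hright : ∑ j ∈ Finset.Ico s D, Eprod b s j * d j = 0 := by
    rw [hsplit, hM0, mul_zero]
  -- apply mixedRadix twice
  have hzlt : ∀ j, 0 ≤ j → j < 0 + s → d j = 0 := by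
    apply mixedRadix b d s 0 (fun j h1 h2 => hb j (by omega))
      (fun j h1 h2 => hbox j (by omega))
    rw [show 0 + s = s from by omega, ← hM, hM0]
  have hzge : ∀ j, s ≤ j → j < s + (D - s) → d j = 0 := by
    apply mixedRadix b d (D - s) s (fun j h1 h2 => hb j (by omega))
      (fun j h1 h2 => hbox j (by omega))
    rw [show s + (D - s) = D from by omega]
    exact hright
  intro j hj
  have : d j = 0 := by
    rcases Nat.lt_or_ge j s with h | h
    · exact hzlt j (Nat.zero_le j) (by omega)
    · exact hzge j h (by omega)
  simp [hd] at this
  linarith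
end

section
/- For every position i = (i_1,...,i_D) ∈ ℤ^D and every 1 ≤ s ≤ D, one has a^s(i) ≡ -(B_D/B_{s-1}) · a^1(i) (mod B + 1). Consequently, any two positions p, q ∈ ℤ^D with a^1(p) = a^1(q) satisfy that B + 1 divides a^s(p) - a^s(q) for every 1 ≤ s ≤ D. -/
/-- For every position `i ∈ ℤ^D` and every coloring `a^s`, one has
`a^s(i) ≡ -(B_D/B_{s-1})·a^1(i) (mod B+1)`.  Consequently, two positions with the same
first color have `s`-th colors differing by a multiple of `B + 1`. -/
theorem stmt6 (D : ℕ) (hD : 1 ≤ D) (b : ℕ → ℤ) (hb : ∀ j < D, 0 < b j) :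
    (∀ s < D, ∀ i : ℕ → ℤ,
      (Bprod b D + 1) ∣
        coloring b D s i - (-(Bprod b D / Bprod b s)) * coloring b D 0 i) ∧
    (∀ s < D, ∀ p q : ℕ → ℤ, coloring b D 0 p = coloring b D 0 q →
      (Bprod b D + 1) ∣ coloring b D s p - coloring b D s q) := by
  have hdvd : ∀ s j : ℕ, s ≤ j → Bprod b s ∣ Bprod b j := by
    intro s j hsj
    exact ⟨∏ k ∈ Finset.Ico s j, b k, (Finset.prod_range_mul_prod_Ico b hsj).symm⟩
  have key : ∀ s < D, ∀ i : ℕ → ℤ,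
      (Bprod b D + 1) ∣
        coloring b D s i - (-(Bprod b D / Bprod b s)) * coloring b D 0 i := by
    intro s hs i
    have hBs : Bprod b s ≠ 0 := by
      have : 0 < Bprod b s := Finset.prod_pos (fun k hk => hb k (lt_of_lt_of_le (Finset.mem_range.mp hk) (le_of_lt hs)))
      exact ne_of_gt this
    have hsD : Bprod b s ∣ Bprod b D := hdvd s D (le_of_lt hs)
    unfold coloring
    rw [Finset.mul_sum, ← Finset.sum_sub_distrib]
    apply Finset.dvd_sum
    intro j hj
    rw [Finset.mem_range] at hj
    have h0 : colorCoeff b D 0 j = Bprod b j := by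
      show Bprod b j / Bprod b 0 = Bprod b j
      simp [Bprod]
    rw [h0]
    by_cases hjs : j < s
    · have hc : colorCoeff b D s j = -(Bprod b j * (Bprod b D / Bprod b s)) := by
        simp [colorCoeff, hjs, Int.mul_ediv_assoc _ hsD]
      rw [hc]
      have hz : -(Bprod b j * (Bprod b D / Bprod b s)) * i j -
          -(Bprod b D / Bprod b s) * (Bprod b j * i j) = 0 := by ring
      rw [hz]
      exact dvd_zero _
    · push_neg at hjs
      obtain ⟨x, hx⟩ := hdvd s j hjs
      obtain ⟨y, hy⟩ := hsD
      have hcx : colorCoeff b D s j = x := by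
        simp only [colorCoeff, if_neg (Nat.not_lt.mpr hjs)]
        rw [hx, Int.mul_ediv_cancel_left _ hBs]
      have hcy : Bprod b D / Bprod b s = y := by
        rw [hy, Int.mul_ediv_cancel_left _ hBs]
      rw [hcx, hcy, hx, hy]
      exact ⟨x * i j, by ring⟩
  refine ⟨key, ?_⟩
  intro s hs p q hpq
  have h1 := key s hs p
  have h2 := key s hs q
  have h3 := dvd_sub h1 h2
  rw [hpq] at h3
  have heq : coloring b D s p - -(Bprod b D / Bprod b s) * coloring b D 0 q -
      (coloring b D s q - -(Bprod b D / Bprod b s) * coloring b D 0 q) =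
      coloring b D s p - coloring b D s q := by ring
  rwa [heq] at h3
end

section
/- Let A_D be the D × D integer matrix whose (s,j) entry is (A_D)_{s,j} = -B_{j-1}·B_D/B_{s-1} for j < s and (A_D)_{s,j} = B_{j-1}/B_{s-1} for j ≥ s. Then det(A_D) = (1 + B)^{D-1}; in particular A_D is invertible, so for any given colors c_1, ..., c_D there is at most one position (i_1,...,i_D) ∈ ℤ^D with a^s(i_1,...,i_D) = c_s for all 1 ≤ s ≤ D. -/
lemma Bprod_pos {b : ℕ → ℤ} {m : ℕ} (hb : ∀ k < m, 0 < b k) : 0 < Bprod b m :=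
  Finset.prod_pos fun k hk => hb k (Finset.mem_range.mp hk)

lemma colorCoeff_eq {b : ℕ → ℤ} {D s : ℕ} (j : ℕ) (hsD : s ≤ D) (hs : ∀ k < D, 0 < b k) :
    colorCoeff b D s j =
      if j < s then -(Bprod b j * ∏ k ∈ Finset.Ico s D, b k)
      else ∏ k ∈ Finset.Ico s j, b k := by
  have hBs : Bprod b s ≠ 0 :=
    (Bprod_pos fun k hk => hs k (lt_of_lt_of_le hk hsD)).ne'
  unfold colorCoeff
  split_ifs with h
  · have hDeq : Bprod b D = Bprod b s * ∏ k ∈ Finset.Ico s D, b k :=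
      (Finset.prod_range_mul_prod_Ico b hsD).symm
    rw [hDeq, show Bprod b j * (Bprod b s * ∏ k ∈ Finset.Ico s D, b k)
        = Bprod b s * (Bprod b j * ∏ k ∈ Finset.Ico s D, b k) by ring,
      Int.mul_ediv_cancel_left _ hBs]
  · have hj : s ≤ j := not_lt.mp h
    have hjeq : Bprod b j = Bprod b s * ∏ k ∈ Finset.Ico s j, b k :=
      (Finset.prod_range_mul_prod_Ico b hj).symm
    rw [hjeq, Int.mul_ediv_cancel_left _ hBs]

/-- The coloring matrix `A_D`, with `(A_D)_{s,j} = -B_{j-1}·B_D/B_{s-1}` for `j < s`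
and `B_{j-1}/B_{s-1}` for `j ≥ s`, has determinant `(1 + B)^(D-1)`; in particular it is
invertible, so any `D`-tuple of colors determines at most one position of `ℤ^D`. -/
theorem stmt7 (D : ℕ) (hD : 1 ≤ D) (b : ℕ → ℤ) (hb : ∀ j < D, 0 < b j) :
    (Matrix.of fun s j : Fin D => colorCoeff b D (s : ℕ) (j : ℕ)).det =
      (1 + Bprod b D) ^ (D - 1) ∧
    ∀ p q : ℕ → ℤ, (∀ s < D, coloring b D s p = coloring b D s q) →
      ∀ j < D, p j = q j := by
  set A : Matrix (Fin D) (Fin D) ℤ :=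
    Matrix.of fun s j : Fin D => colorCoeff b D (s : ℕ) (j : ℕ) with hA
  -- the row-operation matrix
  set T : Matrix (Fin D) (Fin D) ℤ :=
    Matrix.of fun s k : Fin D =>
      (if k = s then (1:ℤ) else 0) + (if (k : ℕ) = (s : ℕ) + 1 then -(b s) else 0) with hT
  -- the resulting lower-triangular matrix
  set M : Matrix (Fin D) (Fin D) ℤ :=
    Matrix.of fun s j : Fin D =>
      if (s : ℕ) = D - 1 then colorCoeff b D (s : ℕ) (j : ℕ)
      else if s = j then 1 + Bprod b D else 0 with hM
  have hTA : T * A = M := by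
    ext s j
    rw [Matrix.mul_apply]
    simp only [hT, hA, hM, Matrix.of_apply, add_mul, Finset.sum_add_distrib]
    have h1 : (∑ k : Fin D, (if k = s then (1:ℤ) else 0) * colorCoeff b D (k:ℕ) (j:ℕ))
        = colorCoeff b D (s:ℕ) (j:ℕ) := by
      rw [Finset.sum_eq_single s]
      · simp
      · intro k _ hk; simp [hk]
      · simp
    rw [h1]
    by_cases hs1 : (s : ℕ) + 1 < D
    · set s' : Fin D := ⟨(s:ℕ)+1, hs1⟩ with hs'
      have h2 : (∑ k : Fin D, (if (k:ℕ) = (s:ℕ)+1 then -(b s) else 0) * colorCoeff b D (k:ℕ) (j:ℕ))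
          = -(b s) * colorCoeff b D ((s:ℕ)+1) (j:ℕ) := by
        rw [Finset.sum_eq_single s']
        · simp [hs']
        · intro k _ hk
          have : (k:ℕ) ≠ (s:ℕ)+1 := fun h => hk (Fin.ext h)
          simp [this]
        · simp
      rw [h2]
      have hsD1 : (s:ℕ) ≠ D - 1 := by omega
      rw [if_neg hsD1]
      have hsle : (s:ℕ) ≤ D := le_of_lt s.isLt
      have hsle1 : (s:ℕ) + 1 ≤ D := hs1.le
      rw [colorCoeff_eq (j:ℕ) hsle hb, colorCoeff_eq (j:ℕ) hsle1 hb]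
      rcases lt_trichotomy (j:ℕ) (s:ℕ) with hjs | hjs | hjs
      · rw [if_pos hjs, if_pos (by omega : (j:ℕ) < (s:ℕ)+1)]
        rw [if_neg (by intro h; rw [h] at hjs; exact lt_irrefl _ hjs)]
        rw [Finset.prod_eq_prod_Ico_succ_bot (lt_of_lt_of_le (by omega) hsle1) b]
        ring
      · have hsj : s = j := Fin.ext hjs.symm
        subst hsj
        rw [if_pos rfl, if_neg (by omega), if_pos (by omega : (s:ℕ) < (s:ℕ)+1)]
        rw [Finset.Ico_self, Finset.prod_empty]
        have hB1 : Bprod b ((s:ℕ)+1) = Bprod b (s:ℕ) * b (s:ℕ) := Finset.prod_range_succ b _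
        have hB2 : Bprod b ((s:ℕ)+1) * ∏ k ∈ Finset.Ico ((s:ℕ)+1) D, b k = Bprod b D :=
          Finset.prod_range_mul_prod_Ico b hsle1
        have hkey : b (s:ℕ) * (Bprod b (s:ℕ) * ∏ k ∈ Finset.Ico ((s:ℕ)+1) D, b k) = Bprod b D := by
          rw [← hB2, hB1]; ring
        linear_combination hkey
      · rw [if_neg (by omega), if_neg (by omega)]
        rw [if_neg (by intro h; rw [h] at hjs; exact lt_irrefl _ hjs)]
        rw [Finset.prod_eq_prod_Ico_succ_bot hjs b]
        ring
    · have hsD1 : (s:ℕ) = D - 1 := by have := s.isLt; omega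
      have h2 : (∑ k : Fin D, (if (k:ℕ) = (s:ℕ)+1 then -(b s) else 0) * colorCoeff b D (k:ℕ) (j:ℕ))
          = 0 := by
        apply Finset.sum_eq_zero
        intro k _
        have : (k:ℕ) ≠ (s:ℕ)+1 := by have := k.isLt; omega
        simp [this]
      rw [h2, if_pos hsD1, add_zero]
  have hdetT : T.det = 1 := by
    rw [Matrix.det_of_upperTriangular]
    · apply Finset.prod_eq_one
      intro i _
      simp [hT]
    · intro i j hij
      have h1 : j ≠ i := ne_of_lt hij
      have h2 : (j:ℕ) ≠ (i:ℕ) + 1 := by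
        have : (j:ℕ) < (i:ℕ) := hij
        omega
      simp [hT, h1, h2]
  have hdetM : M.det = (1 + Bprod b D) ^ (D - 1) := by
    rw [Matrix.det_of_lowerTriangular]
    · set last : Fin D := ⟨D - 1, by omega⟩ with hlast
      have hdiag : ∀ i : Fin D, M i i = if i = last then 1 else 1 + Bprod b D := by
        intro i
        simp only [hM, Matrix.of_apply]
        by_cases hi : (i:ℕ) = D - 1
        · have : i = last := Fin.ext (by simp [hlast, hi])
          rw [if_pos hi, if_pos this]
          rw [colorCoeff_eq (i:ℕ) (le_of_lt i.isLt) hb, if_neg (lt_irrefl _),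
            Finset.Ico_self, Finset.prod_empty]
        · have h5 : i ≠ last := fun h => hi (by rw [h])
          rw [if_neg hi]
          simp [h5]
      rw [Finset.prod_congr rfl fun i _ => hdiag i]
      rw [← Finset.mul_prod_erase Finset.univ _ (Finset.mem_univ last), if_pos rfl, one_mul]
      rw [Finset.prod_congr rfl (fun i hi => if_neg (Finset.ne_of_mem_erase hi)),
        Finset.prod_const, Finset.card_erase_of_mem (Finset.mem_univ last),
        Finset.card_univ, Fintype.card_fin]
    · intro i j hij
      have h1 : (i:ℕ) ≠ D - 1 := by
        have h2 : (j:ℕ) < D := j.isLt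
        have h3 : (i:ℕ) < (j:ℕ) := hij
        omega
      have h4 : i ≠ j := ne_of_lt hij
      simp [hM, h1, h4]
  have hdet : A.det = (1 + Bprod b D) ^ (D - 1) := by
    have := congrArg Matrix.det hTA
    rwa [Matrix.det_mul, hdetT, one_mul, hdetM] at this
  refine ⟨hdet, ?_⟩
  intro p q hpq j hj
  have hBpos : 0 < Bprod b D := Bprod_pos hb
  have hdet0 : A.det ≠ 0 := by
    rw [hdet]; exact pow_ne_zero _ (by omega)
  set v : Fin D → ℤ := fun j => p j - q j with hv
  have hmv : A.mulVec v = 0 := by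
    funext s
    have h1 : coloring b D (s:ℕ) p = coloring b D (s:ℕ) q := hpq (s:ℕ) s.isLt
    unfold coloring at h1
    rw [← Fin.sum_univ_eq_sum_range, ← Fin.sum_univ_eq_sum_range] at h1
    simp only [Matrix.mulVec, dotProduct, hA, hv, Matrix.of_apply, mul_sub,
      Finset.sum_sub_distrib, Pi.zero_apply]
    rw [h1, sub_self]
  have hv0 : v = 0 := Matrix.eq_zero_of_mulVec_eq_zero hdet0 hmv
  have := congrFun hv0 ⟨j, hj⟩
  simpa [hv, sub_eq_zero] using this
end

section
/- Define T : ℤ² → ℤ² by T(i_1, i_2) = (⌈(i_1 + i_2)/2⌉, i_2 - i_1). Let R ≥ 0 be an integer and (c_1, c_2) ∈ ℤ². Then for every (t_1, t_2) ∈ ℤ² with |t_1 - c_1| + |t_2 - c_2| ≤ R, writing (T_1, T_2) = T(t_1, t_2), one has ⌈(c_1 + c_2 - R)/2⌉ ≤ T_1 ≤ ⌈(c_1 + c_2 - R)/2⌉ + R and c_2 - c_1 - R ≤ T_2 ≤ c_2 - c_1 + R. In other words, the Lee sphere of radius R centered at (c_1, c_2) is mapped by T into a rectangle of size (R+1) ×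 (2R+1). -/
/-- `ceilHalf x = ⌈x/2⌉` for an integer `x`. -/
def ceilHalf (x : ℤ) : ℤ := ⌈(x : ℚ) / 2⌉

lemma ceilHalf_mono {a b : ℤ} (h : a ≤ b) : ceilHalf a ≤ ceilHalf b := by
  unfold ceilHalf
  apply Int.ceil_le_ceil
  have : (a : ℚ) ≤ b := by exact_mod_cast h
  linarith

lemma ceilHalf_add_two_mul (x k : ℤ) : ceilHalf (x + 2 * k) = ceilHalf x + k := by
  unfold ceilHalf
  have : ((x + 2 * k : ℤ) : ℚ) / 2 = (x : ℚ) / 2 + (k : ℤ) := by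
    push_cast; ring
  rw [this, Int.ceil_add_intCast]

/-- The transformation `T(i₁,i₂) = (⌈(i₁+i₂)/2⌉, i₂ - i₁)` maps the Lee sphere of
radius `R` centered at `(c₁,c₂)` into a rectangle of size `(R+1) × (2R+1)`: for every
`(t₁,t₂)` with `|t₁-c₁| + |t₂-c₂| ≤ R`, the image `(T₁,T₂)` satisfies
`⌈(c₁+c₂-R)/2⌉ ≤ T₁ ≤ ⌈(c₁+c₂-R)/2⌉ + R` and `c₂-c₁-R ≤ T₂ ≤ c₂-c₁+R`. -/
theorem stmt8 (R : ℤ) (hR : 0 ≤ R) (c₁ c₂ t₁ t₂ : ℤ)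
    (ht : |t₁ - c₁| + |t₂ - c₂| ≤ R) :
    (ceilHalf (c₁ + c₂ - R) ≤ ceilHalf (t₁ + t₂) ∧
      ceilHalf (t₁ + t₂) ≤ ceilHalf (c₁ + c₂ - R) + R) ∧
    (c₂ - c₁ - R ≤ t₂ - t₁ ∧ t₂ - t₁ ≤ c₂ - c₁ + R) := by
  have h1 := abs_le.mp (le_trans (le_add_of_nonneg_right (abs_nonneg _)) ht)
  have h2 := abs_le.mp (le_trans (le_add_of_nonneg_left (abs_nonneg _)) ht)
  have hs1 : c₁ + c₂ - R ≤ t₁ + t₂ := by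
    have a1 := neg_abs_le (t₁ - c₁)
    have a2 := neg_abs_le (t₂ - c₂)
    linarith
  have hs2 : t₁ + t₂ ≤ c₁ + c₂ + R := by
    have a1 := le_abs_self (t₁ - c₁)
    have a2 := le_abs_self (t₂ - c₂)
    linarith
  refine ⟨⟨ceilHalf_mono hs1, ?_⟩, by
    have a1 := le_abs_self (t₁ - c₁)
    have a2 := le_abs_self (t₂ - c₂)
    have b1 := neg_abs_le (t₁ - c₁)
    have b2 := neg_abs_le (t₂ - c₂)
    constructor <;> linarith⟩
  have : ceilHalf (c₁ + c₂ - R) + R = ceilHalf (c₁ + c₂ + R) := by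
    rw [← ceilHalf_add_two_mul (c₁ + c₂ - R) R]; ring_nf
  rw [this]
  exact ceilHalf_mono hs2
end

section
/- Let D ≥ 2. Define T : ℤ^D → ℤ^D by T(i_1,...,i_D) = (i_1^T, ..., i_D^T), where i_j^T = ⌈(Σ_{k=1}^{j} (-1)^{j-k} i_k + i_{j+1}) / 2⌉ for 1 ≤ j ≤ D-1 and i_D^T = Σ_{j=1}^{D} (-1)^{D-j} i_j. Let R ≥ 0 be an integer, c = (c_1,...,c_D) ∈ ℤ^D, and set S_j = Σ_{k=1}^{j} (-1)^{j-k} c_k + c_{j+1} for 1 ≤ j ≤ D-1 and S_D = Σ_{j=1}^{D} (-1)^{D-j} c_j. Then for every t ∈ ℤ^D with Σ_{ℓ=1}^{D} |t_ℓ - c_ℓ| ≤ R one has ⌈(S_j - R)/2⌉ ≤ T(t)_j ≤ ⌈(S_j - R)/2⌉ + R for each 1 ≤ j ≤ D-1, and S_D - R ≤ T(t)_D ≤ S_D + R. In other words, the D-dimensional Lee sphere of radius R is mapped by T into a box of size (R+1) × (R+1) × ... × (R+1) × (2R+1) (with D-1 factors R+1). -/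
/-- The alternating prefix sum `Σ_{k=0}^{j} (-1)^(j-k) x_k + x_{j+1}` (0-indexed),
i.e. the quantity whose half-ceiling is the `(j+1)`-st coordinate of `T(x)`. -/
def altSum (x : ℕ → ℤ) (j : ℕ) : ℤ :=
  (∑ k ∈ Finset.range (j + 1), (-1 : ℤ) ^ (j - k) * x k) + x (j + 1)

/-- The last coordinate of `T(x)`: `Σ_{j=0}^{D-1} (-1)^(D-1-j) x_j` (0-indexed). -/
def lastSum (x : ℕ → ℤ) (D : ℕ) : ℤ :=
  ∑ j ∈ Finset.range D, (-1 : ℤ) ^ (D - 1 - j) * x j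

lemma absSignedSum (e : ℕ → ℕ) (t c : ℕ → ℤ) (n : ℕ) :
    |∑ k ∈ Finset.range n, (-1:ℤ)^(e k) * t k - ∑ k ∈ Finset.range n, (-1:ℤ)^(e k) * c k|
      ≤ ∑ k ∈ Finset.range n, |t k - c k| := by
  rw [← Finset.sum_sub_distrib]
  refine (Finset.abs_sum_le_sum_abs _ _).trans (le_of_eq ?_)
  refine Finset.sum_congr rfl fun k _ => ?_
  rw [← mul_sub, abs_mul, abs_pow, abs_neg, abs_one, one_pow, one_mul]

lemma ceilHalf_bounds {a b R : ℤ} (hR : 0 ≤ R) (h : |b - a| ≤ R) :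
    ceilHalf (a - R) ≤ ceilHalf b ∧ ceilHalf b ≤ ceilHalf (a - R) + R := by
  rw [abs_le] at h
  have h1 : a - R ≤ b := by linarith [h.1]
  have h2 : b ≤ a + R := by linarith [h.2]
  constructor
  · exact Int.ceil_le_ceil (by gcongr <;> exact_mod_cast h1)
  · have : ceilHalf b ≤ ceilHalf (a + R) :=
      Int.ceil_le_ceil (by gcongr <;> exact_mod_cast h2)
    refine this.trans (le_of_eq ?_)
    unfold ceilHalf
    rw [show ((a + R : ℤ) : ℚ) / 2 = ((a - R : ℤ) : ℚ) / 2 + (R : ℤ) by push_cast; ring,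
      Int.ceil_add_intCast]

/-- For `D ≥ 2`, the transformation `T : ℤ^D → ℤ^D` whose first `D-1` coordinates are
`⌈(Σ_{k≤j} (-1)^(j-k) i_k + i_{j+1})/2⌉` and whose last coordinate is
`Σ_j (-1)^(D-1-j) i_j` maps the Lee sphere of radius `R` centered at `c` into a box of
size `(R+1) × ⋯ × (R+1) × (2R+1)` (with `D-1` factors `R+1`). -/
theorem stmt9 (D : ℕ) (hD : 2 ≤ D) (R : ℤ) (hR : 0 ≤ R) (c t : ℕ → ℤ)
    (ht : ∑ l ∈ Finset.range D, |t l - c l| ≤ R) :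
    (∀ j, j + 1 < D →
      ceilHalf (altSum c j - R) ≤ ceilHalf (altSum t j) ∧
      ceilHalf (altSum t j) ≤ ceilHalf (altSum c j - R) + R) ∧
    (lastSum c D - R ≤ lastSum t D ∧ lastSum t D ≤ lastSum c D + R) := by
  have hmono : ∀ n, n ≤ D → ∑ l ∈ Finset.range n, |t l - c l| ≤ R := fun n hn =>
    (Finset.sum_le_sum_of_subset_of_nonneg (Finset.range_subset_range.2 hn)
      (fun i _ _ => abs_nonneg _)).trans ht
  constructor
  · intro j hj
    have key : |altSum t j - altSum c j| ≤ R := by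
      have he : ∀ x : ℕ → ℤ, altSum x j =
          ∑ k ∈ Finset.range (j + 2), (-1:ℤ)^(if k = j + 1 then 0 else j - k) * x k := by
        intro x
        rw [Finset.sum_range_succ, if_pos rfl, pow_zero, one_mul, altSum]
        congr 1
        exact Finset.sum_congr rfl fun k hk => by
          have := Finset.mem_range.1 hk
          rw [if_neg (by omega : k ≠ j + 1)]
      rw [he t, he c]
      exact (absSignedSum _ t c (j + 2)).trans (hmono _ (by omega))
    exact ceilHalf_bounds hR key
  · have key : |lastSum t D - lastSum c D| ≤ R := by
      unfold lastSum
      exact (absSignedSum _ t c D).trans (hmono _ le_rfl)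
    rw [abs_le] at key; omega
end

section
/- Let R ≥ 1 be an integer and define Ψ_1(i_1, i_2) = (R+1)·i_1 + R·i_2 and Ψ_2(i_1, i_2) = -R·i_1 + (R+1)·i_2 for (i_1, i_2) ∈ ℤ². If Ψ_1(i_1, i_2) = Ψ_1(t_1, t_2), then 2R² + 2R + 1 divides Ψ_2(i_1, i_2) - Ψ_2(t_1, t_2). -/
/-- Let `R ≥ 1`, `Ψ₁(i₁,i₂) = (R+1)i₁ + R·i₂` and `Ψ₂(i₁,i₂) = -R·i₁ + (R+1)i₂`.
If `Ψ₁(i₁,i₂) = Ψ₁(t₁,t₂)` then `2R² + 2R + 1` divides `Ψ₂(i₁,i₂) - Ψ₂(t₁,t₂)`. -/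
theorem stmt10 (R : ℤ) (hR : 1 ≤ R) (i₁ i₂ t₁ t₂ : ℤ)
    (h : (R + 1) * i₁ + R * i₂ = (R + 1) * t₁ + R * t₂) :
    (2 * R ^ 2 + 2 * R + 1) ∣
      ((-R * i₁ + (R + 1) * i₂) - (-R * t₁ + (R + 1) * t₂)) := by
  exact ⟨(i₁ - t₁) + (i₂ - t₂), by linear_combination (-(2 * R + 1)) * h⟩
end

section
/- Let R ≥ 1 be an integer and define Ψ_1(i_1, i_2) = (R+1)·i_1 + R·i_2 for (i_1, i_2) ∈ ℤ². If Ψ_1(i_1, i_2) = Ψ_1(t_1, t_2) and (i_1, i_2) ≠ (t_1, t_2), then |i_1 - t_1| + |i_2 - t_2| ≥ 2R + 1. In particular, Ψ_1 is injective on every two-dimensional Lee sphere of radius R. -/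
/-- Let `R ≥ 1` and `Ψ₁(i₁,i₂) = (R+1)i₁ + R·i₂`.  If `Ψ₁(i₁,i₂) = Ψ₁(t₁,t₂)` with
`(i₁,i₂) ≠ (t₁,t₂)`, then `|i₁-t₁| + |i₂-t₂| ≥ 2R + 1`.  In particular `Ψ₁` is
injective on every two-dimensional Lee sphere of radius `R`. -/
theorem stmt11 (R : ℤ) (hR : 1 ≤ R) :
    (∀ i₁ i₂ t₁ t₂ : ℤ,
      (R + 1) * i₁ + R * i₂ = (R + 1) * t₁ + R * t₂ → (i₁, i₂) ≠ (t₁, t₂) →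
      2 * R + 1 ≤ |i₁ - t₁| + |i₂ - t₂|) ∧
    (∀ c₁ c₂ : ℤ, Set.InjOn (fun p : ℤ × ℤ => (R + 1) * p.1 + R * p.2)
      {p : ℤ × ℤ | |p.1 - c₁| + |p.2 - c₂| ≤ R}) := by
  have main : ∀ i₁ i₂ t₁ t₂ : ℤ,
      (R + 1) * i₁ + R * i₂ = (R + 1) * t₁ + R * t₂ → (i₁, i₂) ≠ (t₁, t₂) →
      2 * R + 1 ≤ |i₁ - t₁| + |i₂ - t₂| := by
    intro i₁ i₂ t₁ t₂ heq hne
    set a := i₁ - t₁ with ha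
    set b := i₂ - t₂ with hb
    have hz : (R + 1) * a + R * b = 0 := by simp only [ha, hb]; ring_nf; linarith
    set k := a + b with hk
    have hA : a = -R * k := by simp only [hk]; linarith
    have hB : b = (R + 1) * k := by simp only [hk]; linarith
    have hk0 : k ≠ 0 := by
      intro h
      apply hne
      have : a = 0 := by rw [hA, h]; ring
      have hb0 : b = 0 := by rw [hB, h]; ring
      have h1 : i₁ = t₁ := by linarith [sub_eq_zero.mp this]
      have h2 : i₂ = t₂ := by
        have := sub_eq_zero.mp hb0; linarith
      simp [h1, h2]
    have hk1 : 1 ≤ |k| := Int.one_le_abs hk0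
    have hR0 : (0:ℤ) ≤ R := by linarith
    have : |a| + |b| = (2 * R + 1) * |k| := by
      rw [hA, hB, abs_mul, abs_mul, abs_of_nonneg (by linarith : (0:ℤ) ≤ R + 1),
        abs_neg, abs_of_nonneg hR0]
      ring
    calc 2 * R + 1 = (2 * R + 1) * 1 := by ring
      _ ≤ (2 * R + 1) * |k| := by
          apply mul_le_mul_of_nonneg_left hk1 (by linarith)
      _ = |a| + |b| := this.symm
  refine ⟨main, ?_⟩
  intro c₁ c₂ p hp q hq heq
  by_contra hne
  have := main p.1 p.2 q.1 q.2 heq (by simpa [Prod.ext_iff] using hne)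
  simp only [Set.mem_setOf_eq] at hp hq
  have h1 : |p.1 - q.1| ≤ |p.1 - c₁| + |q.1 - c₁| := by
    calc |p.1 - q.1| = |(p.1 - c₁) - (q.1 - c₁)| := by ring_nf
      _ ≤ |p.1 - c₁| + |q.1 - c₁| := abs_sub _ _
  have h2 : |p.2 - q.2| ≤ |p.2 - c₂| + |q.2 - c₂| := by
    calc |p.2 - q.2| = |(p.2 - c₂) - (q.2 - c₂)| := by ring_nf
      _ ≤ |p.2 - c₂| + |q.2 - c₂| := abs_sub _ _
  linarith
end

section
/- Let R ≥ 1 be an integer, (c_1, c_2) ∈ ℤ², and define Ψ_1(i_1, i_2) = (R+1)·i_1 + R·i_2. Then Ψ_1 restricted to the Lee sphere {(t_1, t_2) ∈ ℤ² : |t_1 - c_1| + |t_2 - c_2| ≤ R} is a bijection onto the set of 2R² + 2R + 1 consecutive integers {m ∈ ℤ : (R+1)(c_1 - R) + R·c_2 ≤ m ≤ (R+1)(c_1 + R) + R·c_2}. -/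
/-- Let `R ≥ 1` and `Ψ₁(i₁,i₂) = (R+1)i₁ + R·i₂`.  Then `Ψ₁` restricted to the Lee
sphere of radius `R` centered at `(c₁,c₂)` is a bijection onto the `2R² + 2R + 1`
consecutive integers from `(R+1)(c₁-R) + R·c₂` to `(R+1)(c₁+R) + R·c₂`. -/
theorem stmt12 (R : ℤ) (hR : 1 ≤ R) (c₁ c₂ : ℤ) :
    Set.BijOn (fun p : ℤ × ℤ => (R + 1) * p.1 + R * p.2)
      {p : ℤ × ℤ | |p.1 - c₁| + |p.2 - c₂| ≤ R}
      {m : ℤ | (R + 1) * (c₁ - R) + R * c₂ ≤ m ∧ m ≤ (R + 1) * (c₁ + R) + R * c₂} := by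
  refine ⟨?_, ?_, ?_⟩
  · -- MapsTo
    rintro ⟨a, b⟩ hp
    simp only [Set.mem_setOf_eq] at hp ⊢
    constructor
    · nlinarith [abs_nonneg (a - c₁), abs_nonneg (b - c₂), le_abs_self (a - c₁),
        le_abs_self (b - c₂), neg_abs_le (a - c₁), neg_abs_le (b - c₂)]
    · nlinarith [abs_nonneg (a - c₁), abs_nonneg (b - c₂), le_abs_self (a - c₁),
        le_abs_self (b - c₂), neg_abs_le (a - c₁), neg_abs_le (b - c₂)]
  · -- InjOn
    rintro ⟨a₁, b₁⟩ hp ⟨a₂, b₂⟩ hq heq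
    simp only [Set.mem_setOf_eq] at hp hq heq
    have hR0 : (0:ℤ) < R := by linarith
    have hco : IsCoprime R (R + 1) := ⟨-1, 1, by ring⟩
    have hdvd : R ∣ (a₁ - a₂) := by
      refine hco.dvd_of_dvd_mul_left ?_
      exact ⟨b₂ - b₁, by linarith [heq]⟩
    obtain ⟨k, hk⟩ := hdvd
    have hb : b₂ - b₁ = (R + 1) * k := by
      have : R * (b₂ - b₁) = R * ((R + 1) * k) := by linear_combination (R+1) * hk - heq
      exact mul_left_cancel₀ (by linarith) this
    have ha1 : |a₁ - a₂| = R * |k| := by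
      rw [hk, abs_mul, abs_of_nonneg (le_of_lt hR0)]
    have hb1 : |b₂ - b₁| = (R + 1) * |k| := by
      rw [hb, abs_mul, abs_of_nonneg (by linarith : (0:ℤ) ≤ R + 1)]
    have t1 : |a₁ - a₂| ≤ |a₁ - c₁| + |a₂ - c₁| := by
      calc |a₁ - a₂| = |(a₁ - c₁) - (a₂ - c₁)| := by ring_nf
        _ ≤ |a₁ - c₁| + |a₂ - c₁| := abs_sub _ _
    have t2 : |b₂ - b₁| ≤ |b₁ - c₂| + |b₂ - c₂| := by
      calc |b₂ - b₁| = |(b₂ - c₂) - (b₁ - c₂)| := by ring_nf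
        _ ≤ |b₂ - c₂| + |b₁ - c₂| := abs_sub _ _
        _ = |b₁ - c₂| + |b₂ - c₂| := by ring
    have hsum : R * |k| + (R + 1) * |k| ≤ 2 * R := by
      rw [← ha1, ← hb1]; linarith
    have hk0 : k = 0 := by
      by_contra h
      have h1 : 1 ≤ |k| := Int.one_le_abs h
      nlinarith
    rw [hk0, mul_zero] at hk hb
    simp only [Prod.mk.injEq]
    omega
  · -- SurjOn
    intro m hm
    simp only [Set.mem_setOf_eq] at hm
    obtain ⟨hm1, hm2⟩ := hm
    set d := m - ((R + 1) * c₁ + R * c₂) with hd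
    have hR0 : (0:ℤ) < R := by linarith
    obtain ⟨q, r, hdiv, hr0, hrR⟩ : ∃ q r : ℤ, R * q + r = d ∧ 0 ≤ r ∧ r < R :=
      ⟨d / R, d % R, Int.mul_ediv_add_emod d R, Int.emod_nonneg d (by linarith),
        Int.emod_lt_of_pos d hR0⟩
    have hdlo : -(R * (R + 1)) ≤ d := by linarith
    have hdhi : d ≤ R * (R + 1) := by linarith
    have hqhi : q ≤ R + 1 := by
      have : R * q ≤ R * (R + 1) := by linarith
      exact le_of_mul_le_mul_left this hR0
    have hqlo : -(R + 1) ≤ q := by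
      have : R * (-(R + 1) - 1) < R * q := by nlinarith
      have := lt_of_mul_lt_mul_left this (le_of_lt hR0)
      omega
    rcases eq_or_lt_of_le hqhi with hqe | hqlt
    · -- q = R + 1, then r = 0, use (c₁ + R, c₂)
      have hre : r = 0 := by nlinarith
      refine ⟨(c₁ + R, c₂), ?_, ?_⟩
      · show |c₁ + R - c₁| + |c₂ - c₂| ≤ R
        simp only [Int.abs_eq_natAbs]
        omega
      · simp only
        linear_combination hdiv - hre - R * hqe
    · have hq' : q ≤ R := by omega
      rcases le_or_gt (2 * r - R) q with hc | hc
      · -- use (c₁ + r, c₂ + (q - r))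
        refine ⟨(c₁ + r, c₂ + (q - r)), ?_, ?_⟩
        · show |c₁ + r - c₁| + |c₂ + (q - r) - c₂| ≤ R
          simp only [Int.abs_eq_natAbs]
          omega
        · simp only
          linear_combination hdiv
      · -- use (c₁ + r - R, c₂ + (q - r + R + 1))
        refine ⟨(c₁ + r - R, c₂ + (q - r + R + 1)), ?_, ?_⟩
        · show |c₁ + r - R - c₁| + |c₂ + (q - r + R + 1) - c₂| ≤ R
          simp only [Int.abs_eq_natAbs]
          omega
        · simp only
          linear_combination hdiv
end

section
/- For every integer D ≥ 1, the D × D matrix M over ℚ with entries M_{s,j} = ((j - s) mod D) + 1 (so each entry lies in {1, ..., D} and each row is a cyclic shift of the row (1, 2, ..., D)) is invertible. -/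
/-!
The matrix is the transpose of the circulant matrix of `v = (1, 2, …, D)`, and circulant matrices
commute, so a single vector `w` with `circulant v *ᵥ w = e₀` gives the inverse `circulant w`.
Consecutive entries of `v` differ by `1` except for the wrap-around jump `1 - D`, hence
`circulant v *ᵥ (e₁ - e₀) = D • e₀ - 𝟙`, while `circulant v *ᵥ 𝟙 = (D (D + 1) / 2) • 𝟙`;
a combination of the two is `w`.
-/

open Matrix

namespace Matrix

variable {R n : Type*} [CommSemiring R] [Fintype n] [AddCommGroup n]

theorem circulant_mulVec_one (v : n → R) : circulant v *ᵥ 1 = fun _ => ∑ i, v i := by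
  funext i
  simp only [mulVec, dotProduct, circulant_apply, Pi.one_apply, mul_one]
  exact Fintype.sum_equiv (Equiv.subLeft i) _ _ fun _ => rfl

theorem isUnit_circulant_of_mulVec_eq_single [DecidableEq n] {v w : n → R}
    (h : circulant v *ᵥ w = Pi.single 0 1) : IsUnit (circulant v) := by
  have hvw : circulant v * circulant w = 1 := by rw [circulant_mul, h, circulant_single_one]
  exact isUnit_iff_exists.mpr ⟨circulant w, hvw, circulant_mul_comm w v ▸ hvw⟩

end Matrix

def sawtooth (K : Type*) [Semiring K] (n : ℕ) (m : Fin (n + 1)) : K := (m : ℕ) + 1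

theorem two_mul_sum_sawtooth (K : Type*) [CommSemiring K] (n : ℕ) :
    2 * ∑ m, sawtooth K n m = (n + 1) * (n + 2) := by
  simp only [sawtooth, Fin.sum_univ_eq_sum_range (fun i => (i : K) + 1)]
  induction n with
  | zero => norm_num
  | succ k ih => rw [Finset.sum_range_succ, mul_add, ih]; push_cast; ring

theorem sawtooth_sub_sawtooth_sub_one (K : Type*) [Ring K] {n : ℕ} (i : Fin (n + 1)) :
    sawtooth K n i - sawtooth K n (i - 1) = 1 - if i = 0 then (n + 1 : K) else 0 := by
  rw [sawtooth, sawtooth, Fin.coe_sub_one]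
  split_ifs with hi
  · subst hi; simp
  · have : 1 ≤ (i : ℕ) := Nat.one_le_iff_ne_zero.mpr (Fin.val_ne_zero_iff.mpr hi)
    push_cast [this]
    abel

theorem circulant_sawtooth_mulVec {K : Type*} [Field K] {n : ℕ}
    (h₁ : (n + 1 : K) ≠ 0) (h₂ : (n + 2 : K) ≠ 0) :
    circulant (sawtooth K n) *ᵥ
      ((n + 1 : K)⁻¹ • (Pi.single 1 1 - Pi.single 0 1) + (2 / ((n + 1) ^ 2 * (n + 2)) : K) • 1)
      = Pi.single 0 1 := by
  have hsum := two_mul_sum_sawtooth K n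
  funext i
  have hdiff := sawtooth_sub_sawtooth_sub_one K i
  simp only [mulVec_add, mulVec_smul, mulVec_sub, mulVec_single_one, circulant_mulVec_one,
    Pi.add_apply, Pi.smul_apply, Pi.sub_apply, col_apply, circulant_apply, sub_zero, smul_eq_mul,
    Pi.single_apply]
  split_ifs at hdiff ⊢ <;> field_simp <;>
    linear_combination -((n + 1) * (n + 2) : K) * hdiff + hsum

/-- For every `D ≥ 1`, the `D × D` rational matrix with entries
`M_{s,j} = ((j - s) mod D) + 1` (each row a cyclic shift of `(1, 2, …, D)`) is
invertible. -/
theorem stmt14 (D : ℕ) (hD : 1 ≤ D) :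
    IsUnit (Matrix.of fun s j : Fin D =>
      (((((j : ℕ) + D - (s : ℕ)) % D + 1 : ℕ) : ℚ))) := by
  obtain ⟨n, rfl⟩ := Nat.exists_eq_add_of_le' hD
  have hM : (Matrix.of fun s j : Fin (n + 1) =>
      (((((j : ℕ) + (n + 1) - (s : ℕ)) % (n + 1) + 1 : ℕ) : ℚ))) =
      (circulant (sawtooth ℚ n))ᵀ := by
    ext s j
    simp only [of_apply, transpose_apply, circulant_apply, sawtooth, Fin.val_sub]
    push_cast
    congr 3
    omega
  rw [hM, isUnit_transpose]
  exact isUnit_circulant_of_mulVec_eq_single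
    (circulant_sawtooth_mulVec (by positivity) (by positivity))
end

section
/- Let b, t, r, m, n be positive integers with t ≤ b ≤ n. Let H_1 be an r × b matrix over GF(2) such that any two vectors u, v ∈ GF(2)^b of Hamming weight at most t with H_1·u = H_1·v are equal (i.e., H_1 is a parity-check matrix of a t-error-correcting code of length b). Let H_2 be an m × n matrix over GF(2) such that for every pattern e ∈ GF(2)^b and all positions 0 ≤ i, j ≤ n - b, if P_i(e) ≠ P_j(e) then H_2·P_i(e) ≠ H_2·P_j(e) (i.e., H_2 is a parity-check matrix of a b-burst-locator code of length n). Let H be the (r + m) × n matrix over GF(2) whose j-th column, for 0 ≤ j ≤ n-1, is the concatenation of the (j mod b)-th column of H_1 and the j-th column of H_2. Then for any two words y¹, y² ∈ GF(2)^n, each of Hamming weight at most t and each with support contained in some interval of b consecutive coordinates, H·y¹ = H·y² implies y¹ = y². In other words, H is a parity-check matrix of a code of length n correcting every burst of length b with at most t erroneous positions. -/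
/-- `place n b i e` is the word of length `n` which carries the burst pattern `e`
(of length `b`, entries aligned cyclically to the residues modulo `b`) starting at
position `i`: its coordinate `i + k` equals `e ((i+k) % b)` for `0 ≤ k < b`, and all
other coordinates are `0`. -/
def place (n b i : ℕ) (e : ℕ → ZMod 2) : Fin n → ZMod 2 :=
  fun j => if i ≤ (j : ℕ) ∧ (j : ℕ) < i + b then e ((j : ℕ) % b) else 0

/-- The parity-check matrix `H` of size `(r+m) × n` whose `j`-th column is the
concatenation of column `j mod b` of `H₁` and column `j` of `H₂`. -/
def combH (r m n b : ℕ) (hb : 0 < b) (H₁ : Matrix (Fin r) (Fin b) (ZMod 2))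
    (H₂ : Matrix (Fin m) (Fin n) (ZMod 2)) : Matrix (Fin (r + m)) (Fin n) (ZMod 2) :=
  fun a j => Fin.addCases (fun a₁ => H₁ a₁ ⟨(j : ℕ) % b, Nat.mod_lt _ hb⟩)
    (fun a₂ => H₂ a₂ j) a

/-- Two positions in a window of length `b` with the same residue mod `b` coincide. -/
lemma window_mod_inj {b i j j' : ℕ}
    (h1 : i ≤ j) (h2 : j < i + b) (h3 : i ≤ j') (h4 : j' < i + b)
    (h : j % b = j' % b) : j = j' := by
  have d1 := Nat.div_add_mod j b
  have d2 := Nat.div_add_mod j' b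
  rcases Nat.lt_trichotomy (j / b) (j' / b) with hlt | heq | hgt
  · have h5 : b * (j / b) + b ≤ b * (j' / b) := by
      have h6 : b * (j / b + 1) ≤ b * (j' / b) := Nat.mul_le_mul_left _ hlt
      rw [Nat.mul_add, Nat.mul_one] at h6
      exact h6
    linarith
  · rw [← d1, ← d2, heq, h]
  · have h5 : b * (j' / b) + b ≤ b * (j / b) := by
      have h6 : b * (j' / b + 1) ≤ b * (j / b) := Nat.mul_le_mul_left _ hgt
      rw [Nat.mul_add, Nat.mul_one] at h6
      exact h6
    linarith

/-- Let `t ≤ b ≤ n`.  If `H₁` is a parity-check matrix of a `t`-error-correcting code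
of length `b` and `H₂` is a parity-check matrix of a `b`-burst-locator code of length
`n`, then the combined matrix `H` is a parity-check matrix of a code of length `n`
correcting every burst of length `b` with at most `t` erroneous positions: any two
words of weight at most `t`, each supported in an interval of `b` consecutive
coordinates, with equal syndromes, are equal. -/
theorem stmt15 (b t r m n : ℕ) (hb : 0 < b) (htpos : 0 < t) (hr : 0 < r) (hm : 0 < m)
    (htb : t ≤ b) (hbn : b ≤ n)
    (H₁ : Matrix (Fin r) (Fin b) (ZMod 2))
    (hH₁ : ∀ u v : Fin b → ZMod 2, hammingNorm u ≤ t → hammingNorm v ≤ t →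
      H₁.mulVec u = H₁.mulVec v → u = v)
    (H₂ : Matrix (Fin m) (Fin n) (ZMod 2))
    (hH₂ : ∀ (e : ℕ → ZMod 2) (i j : ℕ), i ≤ n - b → j ≤ n - b →
      place n b i e ≠ place n b j e →
      H₂.mulVec (place n b i e) ≠ H₂.mulVec (place n b j e)) :
    ∀ y₁ y₂ : Fin n → ZMod 2,
      hammingNorm y₁ ≤ t → hammingNorm y₂ ≤ t →
      (∃ i : ℕ, ∀ j : Fin n, y₁ j ≠ 0 → i ≤ (j : ℕ) ∧ (j : ℕ) < i + b) →
      (∃ i : ℕ, ∀ j : Fin n, y₂ j ≠ 0 → i ≤ (j : ℕ) ∧ (j : ℕ) < i + b) →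
      (combH r m n b hb H₁ H₂).mulVec y₁ = (combH r m n b hb H₁ H₂).mulVec y₂ →
      y₁ = y₂ := by
  intro y₁ y₂ hw₁ hw₂ hs₁ hs₂ hsyn
  obtain ⟨i₁, hi₁⟩ := hs₁
  obtain ⟨i₂, hi₂⟩ := hs₂
  -- the residue projection
  set π : Fin n → Fin b := fun j => ⟨(j : ℕ) % b, Nat.mod_lt _ hb⟩ with hπ
  -- fiber sums
  set uOf : (Fin n → ZMod 2) → (Fin b → ZMod 2) :=
    fun y c => ∑ j ∈ Finset.univ.filter (fun j => π j = c), y j with huOf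
  -- normalized starting positions
  set i₁' := min i₁ (n - b) with hi₁'def
  set i₂' := min i₂ (n - b) with hi₂'def
  have hii₁ : i₁' ≤ n - b := min_le_right _ _
  have hii₂ : i₂' ≤ n - b := min_le_right _ _
  have hsupp₁ : ∀ j : Fin n, y₁ j ≠ 0 → i₁' ≤ (j : ℕ) ∧ (j : ℕ) < i₁' + b := by
    intro j hj
    have := hi₁ j hj
    have := j.isLt
    omega
  have hsupp₂ : ∀ j : Fin n, y₂ j ≠ 0 → i₂' ≤ (j : ℕ) ∧ (j : ℕ) < i₂' + b := by
    intro j hj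
    have := hi₂ j hj
    have := j.isLt
    omega
  -- weight of fiber sums
  have hwu : ∀ y : Fin n → ZMod 2, hammingNorm (uOf y) ≤ hammingNorm y := by
    intro y
    unfold hammingNorm
    apply Finset.card_le_card_of_surjOn π
    intro c hc
    simp only [Finset.coe_filter, Set.mem_setOf_eq, Finset.mem_univ, true_and] at hc
    obtain ⟨j, hj, hjne⟩ := Finset.exists_ne_zero_of_sum_ne_zero hc
    simp only [Finset.mem_filter, Finset.mem_univ, true_and] at hj
    exact ⟨j, by simp [hjne], hj⟩
  -- top syndrome computes H₁ applied to fiber sums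
  have htop : ∀ (y : Fin n → ZMod 2) (a : Fin r),
      (combH r m n b hb H₁ H₂).mulVec y (Fin.castAdd m a) = H₁.mulVec (uOf y) a := by
    intro y a
    have : H₁.mulVec (uOf y) a
        = ∑ c : Fin b, ∑ j ∈ Finset.univ.filter (fun j => π j = c), H₁ a (π j) * y j := by
      simp only [Matrix.mulVec, dotProduct, huOf, Finset.mul_sum]
      refine Finset.sum_congr rfl fun c _ => Finset.sum_congr rfl fun j hj => ?_
      simp only [Finset.mem_filter] at hj
      rw [hj.2]
    rw [this, Finset.sum_fiberwise]
    simp only [Matrix.mulVec, dotProduct, combH, Fin.addCases_left, hπ]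
  -- expression of a window-supported word as a `place`
  have hplace : ∀ (y : Fin n → ZMod 2) (i : ℕ), i ≤ n - b →
      (∀ j : Fin n, y j ≠ 0 → i ≤ (j : ℕ) ∧ (j : ℕ) < i + b) →
      y = place n b i (fun k => uOf y ⟨k % b, Nat.mod_lt _ hb⟩) := by
    intro y i hin hsupp
    funext j
    unfold place
    by_cases hw : i ≤ (j : ℕ) ∧ (j : ℕ) < i + b
    · rw [if_pos hw]
      have hmm : (j : ℕ) % b % b = (j : ℕ) % b := Nat.mod_mod_of_dvd _ dvd_rfl
      have hfin : (⟨(j : ℕ) % b % b, Nat.mod_lt _ hb⟩ : Fin b) = π j := by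
        apply Fin.ext
        simp [hπ, hmm]
      show y j = uOf y ⟨(j : ℕ) % b % b, Nat.mod_lt _ hb⟩
      rw [hfin, huOf]
      symm
      apply Finset.sum_eq_single_of_mem
      · simp
      · intro j' hj' hne
        simp only [Finset.mem_filter, Finset.mem_univ, true_and] at hj'
        by_contra hne0
        have hwin' := hsupp j' hne0
        have : (j' : ℕ) = (j : ℕ) := by
          apply window_mod_inj hwin'.1 hwin'.2 hw.1 hw.2
          have := congrArg (fun c : Fin b => (c : ℕ)) hj'
          simpa [hπ] using this
        exact hne (Fin.ext this)
    · rw [if_neg hw]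
      by_contra hne0
      exact hw (hsupp j hne0)
  -- top parts of the syndromes agree
  have hu : uOf y₁ = uOf y₂ := by
    apply hH₁ _ _ (le_trans (hwu y₁) hw₁) (le_trans (hwu y₂) hw₂)
    funext a
    rw [← htop y₁ a, ← htop y₂ a, hsyn]
  -- bottom parts of the syndromes agree
  have hbot : H₂.mulVec y₁ = H₂.mulVec y₂ := by
    funext a
    have h1 : (combH r m n b hb H₁ H₂).mulVec y₁ (Fin.natAdd r a)
        = H₂.mulVec y₁ a := by
      simp only [Matrix.mulVec, dotProduct, combH, Fin.addCases_right]
    have h2 : (combH r m n b hb H₁ H₂).mulVec y₂ (Fin.natAdd r a)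
        = H₂.mulVec y₂ a := by
      simp only [Matrix.mulVec, dotProduct, combH, Fin.addCases_right]
    rw [← h1, ← h2, hsyn]
  -- common pattern
  set e : ℕ → ZMod 2 := fun k => uOf y₁ ⟨k % b, Nat.mod_lt _ hb⟩ with he
  have hy₁ : y₁ = place n b i₁' e := hplace y₁ i₁' hii₁ hsupp₁
  have hy₂ : y₂ = place n b i₂' e := by
    have := hplace y₂ i₂' hii₂ hsupp₂
    rw [this, he, hu]
  by_contra hne
  refine hH₂ e i₁' i₂' hii₁ hii₂ ?_ ?_
  · rw [← hy₁, ← hy₂]; exact hne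
  · rw [← hy₁, ← hy₂]; exact hbot
end

section
/- Let b_1, b_2 ≥ 2 be integers with b_1·b_2 odd, and let r_1 ≥ b_1 and r > b_1·b_2 be integers. Set q = 2^{b_2}, n_1 = (q^{r_1 - b_1 + 1} - 1)/(q - 1), n_L = 2^{r - b_1 b_2 + 1} - 1 and n_2 = ⌊n_L / b_1⌋. Assume: (i) there exists an F_q-linear code C_1 ⊆ F_q^{n_1} of dimension n_1 - r_1 over F_q such that for any two distinct words u ≠ v of F_q^{n_1}, each of whose support is contained in some interval of b_1 consecutive coordinates, u - v ∉ C_1 (an optimum b_1-burst-correcting code over GF(2^{b_2})); and (ii) there exists a binary linear code C_2 ⊆ F_2^{n_L} of dimension n_L - (r - b_1 b_2 + 1) such that for every pattern e ∈ F_2^{b_1 b_2} and all positions 0 ≤ i, j ≤ n_L - b_1 b_2 with P_i(e) ≠ P_j(e), one has P_i(e) - P_j(e) ∉ C_2 (a binary (b_1 b_2)-burst-locator code). Then there exists an F_2-linear subspace C of the space of n_1 × n_2 binary arrays with dim(C) ≥ n_1·n_2 - (r_1·b_2 + r - b_1·b_2 + 2) which corrects every cluster-error of size b_1 × b_2: for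 any two distinct arrays E_1 ≠ E_2 ∈ F_2^{n_1 × n_2}, each of whose support is contained in some axis-aligned rectangle of size b_1 × b_2, E_1 - E_2 ∉ C. -/
/-!
The code consists of the arrays whose row compressions (row `i` becomes the element of
`GF(2^{b₂})` with coordinates the sums of its entries over the column classes modulo `b₂`) form a
word of `C₁`, and whose column folding (entry `(i, j)` goes to position `b₁ j + i mod b₁`) is a word
of `C₂`; this costs `b₂ r₁` plus `r - b₁ b₂ + 1` checks.

Let `E₁, E₂` be `b₁ × b₂` clusters with `E₁ - E₂` in the code. Their row compressions are
`b₁`-bursts, so `C₁` forces them to agree. A row of a cluster lies in `b₂` consecutive columns, so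
its compression determines it; hence `E₂` has its nonzero rows among those of `E₁`, and both
foldings are `b₁ b₂`-bursts with the same cyclic pattern (the sums over row classes modulo `b₁` and
column classes modulo `b₂`). The locator code `C₂` forces the foldings to agree, and folding is
injective on arrays supported in `b₁` consecutive rows.
-/

open Finset Module

section Bursts

variable {n : ℕ}

def IsBurstAt {M : Type*} [Zero M] (a b : ℕ) (f : Fin n → M) : Prop :=
  ∀ j, f j ≠ 0 → a ≤ (j : ℕ) ∧ (j : ℕ) < a + b

variable {M N : Type*} [Zero M] [Zero N] {a b : ℕ} {f : Fin n → M}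

lemma IsBurstAt.comp (hf : IsBurstAt a b f) {g : M → N} (hg : g 0 = 0) :
    IsBurstAt a b fun j => g (f j) :=
  fun j hj => hf j fun h => hj (by simp only [h, hg])

lemma IsBurstAt.clamp (hf : IsBurstAt a b f) : IsBurstAt (min a (n - b)) b f :=
  fun j hj => by have := hf j hj; have := j.isLt; omega

def IsClusterAt {n₁ n₂ : ℕ} (a c b₁ b₂ : ℕ) (E : Fin n₁ → Fin n₂ → M) : Prop :=
  ∀ i j, E i j ≠ 0 → (a ≤ (i : ℕ) ∧ (i : ℕ) < a + b₁) ∧ (c ≤ (j : ℕ) ∧ (j : ℕ) < c + b₂)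

variable {n₁ n₂ a c b₁ b₂ : ℕ} {E : Fin n₁ → Fin n₂ → M}

lemma IsClusterAt.rows (hE : IsClusterAt a c b₁ b₂ E) : IsBurstAt a b₁ E := fun i hi =>
  let ⟨j, hj⟩ := Function.ne_iff.mp hi
  (hE i j hj).1

lemma IsClusterAt.cols (hE : IsClusterAt a c b₁ b₂ E) (i : Fin n₁) : IsBurstAt c b₂ (E i) :=
  fun j hj => (hE i j hj).2

end Bursts

section ResidueSum

variable {R : Type*} [CommSemiring R] {n : ℕ}

/-- Since `j % 0 = j`, `residueSum 0 c f` is the entry `f c` (and `0` when `c ≥ n`). -/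
def residueSum (b c : ℕ) : (Fin n → R) →ₗ[R] R :=
  ∑ j : Fin n with j.val % b = c % b, LinearMap.proj j

lemma residueSum_apply (b c : ℕ) (f : Fin n → R) :
    residueSum b c f = ∑ j : Fin n with j.val % b = c % b, f j := by
  simp [residueSum]

lemma residueSum_congr {b c c' : ℕ} (h : c % b = c' % b) :
    residueSum (R := R) (n := n) b c = residueSum b c' := by
  simp only [residueSum, h]

lemma residueSum_zero_val (f : Fin n → R) (j : Fin n) : residueSum 0 j f = f j := by
  simp [residueSum_apply, Fin.val_inj, sum_filter]

variable {a b c : ℕ} {f : Fin n → R}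

lemma IsBurstAt.residueSum_eq_residueSum_zero (hf : IsBurstAt a b f) (hc : a ≤ c ∧ c < a + b) :
    residueSum b c f = residueSum 0 c f := by
  simp only [residueSum_apply, Nat.mod_zero, sum_filter]
  refine sum_congr rfl fun j _ => ?_
  by_cases hj : f j = 0
  · simp [hj]
  · have hwin := hf j hj
    have hmod : (j : ℕ) % b = c % b ↔ (j : ℕ) = c :=
      ⟨fun h : (j : ℕ) ≡ c [MOD b] =>
        le_antisymm (h.le_of_lt_add (by omega)) (h.symm.le_of_lt_add (by omega)), fun h => h ▸ rfl⟩
    simp only [hmod]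

lemma IsBurstAt.residueSum_zero_eq_zero (hf : IsBurstAt a b f) (hc : ¬(a ≤ c ∧ c < a + b)) :
    residueSum 0 c f = 0 := by
  rw [residueSum_apply]
  refine sum_eq_zero fun j hj => ?_
  by_contra h
  simp only [Nat.mod_zero, mem_filter] at hj
  exact hc (hj.2 ▸ hf j h)

lemma IsBurstAt.eq_zero_of_residueSum_eq_zero (hf : IsBurstAt a b f)
    (h : ∀ c, residueSum b c f = 0) : f = 0 := by
  funext j
  by_contra hj
  have := hf.residueSum_eq_residueSum_zero (hf j hj)
  rw [h, residueSum_zero_val] at this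
  exact hj this.symm

end ResidueSum

section Arrays

variable {R : Type*} [CommSemiring R] {n₁ n₂ : ℕ}

def residueSum₂ (b₁ b₂ k c : ℕ) : (Fin n₁ → Fin n₂ → R) →ₗ[R] R :=
  residueSum b₁ k ∘ₗ (residueSum b₂ c).compLeft (Fin n₁)

lemma residueSum₂_apply (b₁ b₂ k c : ℕ) (E : Fin n₁ → Fin n₂ → R) :
    residueSum₂ b₁ b₂ k c E = residueSum b₁ k fun i => residueSum b₂ c (E i) := rfl

lemma residueSum₂_congr {b₁ b₂ k k' c c' : ℕ} (hk : k % b₁ = k' % b₁) (hc : c % b₂ = c' % b₂) :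
    residueSum₂ (R := R) (n₁ := n₁) (n₂ := n₂) b₁ b₂ k c = residueSum₂ b₁ b₂ k' c' := by
  rw [residueSum₂, residueSum₂, residueSum_congr hk, residueSum_congr hc]

variable {a b₁ b₂ d : ℕ} {E : Fin n₁ → Fin n₂ → R}

lemma residueSum₂_eq_residueSum₂_zero (hE : ∀ i, IsBurstAt d b₂ (E i)) {c : ℕ}
    (hc : d ≤ c ∧ c < d + b₂) (k : ℕ) :
    residueSum₂ b₁ b₂ k c E = residueSum₂ b₁ 0 k c E := by
  simp only [residueSum₂_apply, (hE _).residueSum_eq_residueSum_zero hc]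

lemma residueSum₂_zero_eq_apply (hE : IsBurstAt a b₁ E) {i : Fin n₁}
    (hi : a ≤ (i : ℕ) ∧ (i : ℕ) < a + b₁) (j : Fin n₂) :
    residueSum₂ b₁ 0 i j E = E i j := by
  rw [residueSum₂_apply, (hE.comp (map_zero (residueSum 0 j))).residueSum_eq_residueSum_zero hi,
    residueSum_zero_val, residueSum_zero_val]

/-- Entry `(i, j)` is sent to position `b₁ * j + i % b₁`. -/
def foldColumns (b₁ N : ℕ) : (Fin n₁ → Fin n₂ → R) →ₗ[R] (Fin N → R) :=
  LinearMap.pi fun m => residueSum₂ b₁ 0 m (m / b₁)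

lemma foldColumns_apply (b₁ N : ℕ) (E : Fin n₁ → Fin n₂ → R) (m : Fin N) :
    foldColumns b₁ N E m = residueSum₂ b₁ 0 m (m / b₁) E := rfl

lemma foldColumns_apply_mul_add_mod {N : ℕ} (hb₁ : 0 < b₁) (hE : IsBurstAt a b₁ E) {i : Fin n₁}
    (hi : a ≤ (i : ℕ) ∧ (i : ℕ) < a + b₁) (j : Fin n₂) (hm : b₁ * j + i % b₁ < N) :
    foldColumns b₁ N E ⟨b₁ * j + i % b₁, hm⟩ = E i j := by
  rw [foldColumns_apply, ← residueSum₂_zero_eq_apply hE hi j]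
  refine congrArg (· E) (residueSum₂_congr ?_ ?_)
  · simp
  · simp [Nat.mul_add_div hb₁, Nat.div_eq_of_lt (Nat.mod_lt _ hb₁)]

lemma eq_of_foldColumns_eq {N : ℕ} (hb₁ : 0 < b₁) (hN : b₁ * n₂ ≤ N) {E' : Fin n₁ → Fin n₂ → R}
    (hE : IsBurstAt a b₁ E) (hE' : IsBurstAt a b₁ E')
    (h : foldColumns b₁ N E = foldColumns b₁ N E') : E = E' := by
  funext i j
  by_cases hi : a ≤ (i : ℕ) ∧ (i : ℕ) < a + b₁
  · have hm : b₁ * j + i % b₁ < N := by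
      have := Nat.mod_lt i hb₁
      have := Nat.mul_le_mul_left b₁ (Nat.succ_le_of_lt j.isLt)
      rw [Nat.mul_succ] at this
      omega
    rw [← foldColumns_apply_mul_add_mod hb₁ hE hi j hm, h,
      foldColumns_apply_mul_add_mod hb₁ hE' hi j hm]
  · have row_eq_zero : ∀ E : Fin n₁ → Fin n₂ → R, IsBurstAt a b₁ E → E i = 0 :=
      fun E hE => by_contra fun h => hi (hE i h)
    rw [row_eq_zero E hE, row_eq_zero E' hE']

lemma foldColumns_eq_place (hb₁ : 0 < b₁) {N : ℕ} {E : Fin n₁ → Fin n₂ → ZMod 2}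
    (hE : ∀ i, IsBurstAt d b₂ (E i)) :
    foldColumns b₁ N E = place N (b₁ * b₂) (b₁ * d) fun s => residueSum₂ b₁ b₂ s (s / b₁) E := by
  funext m
  have hwin : (b₁ * d ≤ m ∧ (m : ℕ) < b₁ * d + b₁ * b₂) ↔ (d ≤ m / b₁ ∧ m / b₁ < d + b₂) := by
    rw [Nat.le_div_iff_mul_le hb₁, Nat.div_lt_iff_lt_mul hb₁]
    constructor <;> rintro ⟨h, h'⟩ <;> constructor <;> linarith
  rw [foldColumns_apply, place]
  split_ifs with hm
  · rw [← residueSum₂_eq_residueSum₂_zero hE (hwin.1 hm)]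
    refine congrArg (· E) (residueSum₂_congr ?_ ?_)
    · exact (Nat.mod_mod_of_dvd _ (dvd_mul_right b₁ b₂)).symm
    · rw [Nat.mod_mul_right_div_self, Nat.mod_mod]
  · simp only [residueSum₂_apply, (hE _).residueSum_zero_eq_zero (mt hwin.2 hm)]
    exact map_zero _

variable {K : Type*} [AddCommMonoid K] [Module R K] (B : Basis (Fin b₂) R K)

noncomputable def compressRows : (Fin n₁ → Fin n₂ → R) →ₗ[R] (Fin n₁ → K) :=
  (B.equivFun.symm.toLinearMap ∘ₗ LinearMap.pi fun c : Fin b₂ => residueSum b₂ c).compLeft (Fin n₁)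

lemma equivFun_compressRows (E : Fin n₁ → Fin n₂ → R) (i : Fin n₁) :
    B.equivFun (compressRows B E i) = fun c : Fin b₂ => residueSum b₂ c (E i) :=
  B.equivFun.apply_symm_apply _

lemma IsBurstAt.compressRows (hE : IsBurstAt a b₁ E) : IsBurstAt a b₁ (compressRows B E) :=
  fun i hi => hE i fun h => hi <| B.equivFun.map_eq_zero_iff.mp <| by
    rw [equivFun_compressRows, h]
    simp only [map_zero]
    rfl

variable {B} in
lemma residueSum_eq_of_compressRows_eq (hb₂ : 0 < b₂) {E' : Fin n₁ → Fin n₂ → R}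
    (h : compressRows B E = compressRows B E') (i : Fin n₁) (c : ℕ) :
    residueSum b₂ c (E i) = residueSum b₂ c (E' i) := by
  have := congrFun (congrArg B.equivFun (congrFun h i)) ⟨c % b₂, Nat.mod_lt c hb₂⟩
  simp only [equivFun_compressRows, residueSum_congr (Nat.mod_mod c b₂)] at this
  exact this

lemma IsBurstAt.of_residueSum_eq {E' : Fin n₁ → Fin n₂ → R} (hE : IsBurstAt a b₁ E)
    (hE' : ∀ i, IsBurstAt d b₂ (E' i)) (h : ∀ i c, residueSum b₂ c (E i) = residueSum b₂ c (E' i)) :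
    IsBurstAt a b₁ E' := by
  intro i hi
  refine hE i fun h0 => hi ((hE' i).eq_zero_of_residueSum_eq_zero fun c => ?_)
  rw [← h, h0, map_zero]

end Arrays

section Dimension

variable {F V W₁ W₂ : Type*} [Field F] [AddCommGroup V] [Module F V] [AddCommGroup W₁]
  [Module F W₁] [AddCommGroup W₂] [Module F W₂] [FiniteDimensional F V] [FiniteDimensional F W₁]
  [FiniteDimensional F W₂]

lemma finrank_le_finrank_comap_inf_comap_add (f : V →ₗ[F] W₁) (g : V →ₗ[F] W₂)
    (p : Submodule F W₁) (q : Submodule F W₂) :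
    finrank F V ≤ finrank F ↥(p.comap f ⊓ q.comap g) + finrank F (W₁ ⧸ p) + finrank F (W₂ ⧸ q) := by
  let Φ := (p.mkQ ∘ₗ f).prod (q.mkQ ∘ₗ g)
  have hker : LinearMap.ker Φ = p.comap f ⊓ q.comap g := by
    simp [Φ, LinearMap.ker_prod, LinearMap.ker_comp]
  have hrange : finrank F (LinearMap.range Φ) ≤ finrank F (W₁ ⧸ p) + finrank F (W₂ ⧸ q) :=
    finrank_prod (R := F) (M := W₁ ⧸ p) (M' := W₂ ⧸ q) ▸ (LinearMap.range Φ).finrank_le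
  have := LinearMap.finrank_range_add_finrank_ker Φ
  rw [hker] at this
  omega

end Dimension

theorem eq_of_sub_mem_comap_compressRows_inf_comap_foldColumns {K : Type*} [AddCommGroup K]
    [Module (ZMod 2) K] {b₁ b₂ n₁ n₂ N : ℕ} (hb₁ : 0 < b₁) (hb₂ : 0 < b₂) (hN : b₁ * n₂ ≤ N)
    (B : Basis (Fin b₂) (ZMod 2) K) {C₁ : Submodule (ZMod 2) (Fin n₁ → K)}
    {C₂ : Submodule (ZMod 2) (Fin N → ZMod 2)}
    (hC₁ : ∀ u v : Fin n₁ → K, u ≠ v → (∃ a, IsBurstAt a b₁ u) → (∃ a, IsBurstAt a b₁ v) →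
      u - v ∉ C₁)
    (hC₂ : ∀ (e : ℕ → ZMod 2) (i j : ℕ), i ≤ N - b₁ * b₂ → j ≤ N - b₁ * b₂ →
      place N (b₁ * b₂) i e ≠ place N (b₁ * b₂) j e →
      place N (b₁ * b₂) i e - place N (b₁ * b₂) j e ∉ C₂)
    {E₁ E₂ : Fin n₁ → Fin n₂ → ZMod 2} {a₁ a₂ c₁ c₂ : ℕ}
    (h₁ : IsClusterAt a₁ c₁ b₁ b₂ E₁) (h₂ : IsClusterAt a₂ c₂ b₁ b₂ E₂)
    (h : E₁ - E₂ ∈ C₁.comap (compressRows B) ⊓ C₂.comap (foldColumns b₁ N)) : E₁ = E₂ := by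
  simp only [Submodule.mem_inf, Submodule.mem_comap, map_sub] at h
  have hrows : compressRows B E₁ = compressRows B E₂ := by
    by_contra hne
    exact hC₁ _ _ hne ⟨a₁, h₁.rows.compressRows B⟩ ⟨a₂, h₂.rows.compressRows B⟩ h.1
  have hres := residueSum_eq_of_compressRows_eq hb₂ hrows
  have hpattern : (fun s => residueSum₂ b₁ b₂ s (s / b₁) E₁) =
      fun s => residueSum₂ b₁ b₂ s (s / b₁) E₂ := by
    funext s
    simp only [residueSum₂_apply, hres]
  have hstart : ∀ c, b₁ * min c (n₂ - b₂) ≤ N - b₁ * b₂ := fun c => by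
    have := Nat.mul_le_mul_left b₁ (min_le_right c (n₂ - b₂))
    rw [Nat.mul_sub] at this
    omega
  have hcols : foldColumns b₁ N E₁ = foldColumns b₁ N E₂ := by
    rw [foldColumns_eq_place hb₁ fun i => (h₁.cols i).clamp,
      foldColumns_eq_place hb₁ fun i => (h₂.cols i).clamp, hpattern] at h ⊢
    by_contra hne
    exact hC₂ _ _ _ (hstart c₁) (hstart c₂) hne h.2
  exact eq_of_foldColumns_eq hb₁ hN h₁.rows (h₁.rows.of_residueSum_eq h₂.cols hres) hcols

theorem stmt16_general (b₁ b₂ r₁ r : ℕ) (hb₁ : 2 ≤ b₁) (hb₂ : 2 ≤ b₂) (hr : b₁ * b₂ < r) :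
    ∀ n₁ nL n₂ : ℕ,
      n₁ = ((2 ^ b₂) ^ (r₁ - b₁ + 1) - 1) / (2 ^ b₂ - 1) →
      nL = 2 ^ (r - b₁ * b₂ + 1) - 1 →
      n₂ = nL / b₁ →
      (∃ C₁ : Submodule (GaloisField 2 b₂) (Fin n₁ → GaloisField 2 b₂),
        Module.finrank (GaloisField 2 b₂) C₁ = n₁ - r₁ ∧
        ∀ u v : Fin n₁ → GaloisField 2 b₂, u ≠ v →
          (∃ i : ℕ, ∀ j : Fin n₁, u j ≠ 0 → i ≤ (j : ℕ) ∧ (j : ℕ) < i + b₁) →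
          (∃ i : ℕ, ∀ j : Fin n₁, v j ≠ 0 → i ≤ (j : ℕ) ∧ (j : ℕ) < i + b₁) →
          u - v ∉ C₁) →
      (∃ C₂ : Submodule (ZMod 2) (Fin nL → ZMod 2),
        Module.finrank (ZMod 2) C₂ = nL - (r - b₁ * b₂ + 1) ∧
        ∀ (e : ℕ → ZMod 2) (i j : ℕ), i ≤ nL - b₁ * b₂ → j ≤ nL - b₁ * b₂ →
          place nL (b₁ * b₂) i e ≠ place nL (b₁ * b₂) j e →
          place nL (b₁ * b₂) i e - place nL (b₁ * b₂) j e ∉ C₂) →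
      ∃ C : Submodule (ZMod 2) (Fin n₁ → Fin n₂ → ZMod 2),
        n₁ * n₂ - (r₁ * b₂ + r - b₁ * b₂ + 2) ≤ Module.finrank (ZMod 2) C ∧
        ∀ E₁ E₂ : Fin n₁ → Fin n₂ → ZMod 2, E₁ ≠ E₂ →
          (∃ i₀ j₀ : ℕ, ∀ (i : Fin n₁) (j : Fin n₂), E₁ i j ≠ 0 →
            (i₀ ≤ (i : ℕ) ∧ (i : ℕ) < i₀ + b₁) ∧ (j₀ ≤ (j : ℕ) ∧ (j : ℕ) < j₀ + b₂)) →
          (∃ i₀ j₀ : ℕ, ∀ (i : Fin n₁) (j : Fin n₂), E₂ i j ≠ 0 →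
            (i₀ ≤ (i : ℕ) ∧ (i : ℕ) < i₀ + b₁) ∧ (j₀ ≤ (j : ℕ) ∧ (j : ℕ) < j₀ + b₂)) →
          E₁ - E₂ ∉ C := by
  rintro n₁ nL n₂ - - rfl ⟨C₁, hC₁, hcorr⟩ ⟨C₂, hC₂, hloc⟩
  have hK : finrank (ZMod 2) (GaloisField 2 b₂) = b₂ := GaloisField.finrank 2 (by omega)
  let B := (finBasis (ZMod 2) (GaloisField 2 b₂)).reindex (finCongr hK)
  refine ⟨(C₁.restrictScalars (ZMod 2)).comap (compressRows B) ⊓ C₂.comap (foldColumns b₁ nL),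
    ?_, fun E₁ E₂ hne ⟨a₁, c₁, h₁⟩ ⟨a₂, c₂, h₂⟩ hmem => hne ?_⟩
  · have hdim := finrank_le_finrank_comap_inf_comap_add (compressRows B)
      (foldColumns (n₁ := n₁) (n₂ := nL / b₁) b₁ nL) (C₁.restrictScalars (ZMod 2)) C₂
    have hq₁ : finrank (ZMod 2) ((Fin n₁ → GaloisField 2 b₂) ⧸ C₁.restrictScalars (ZMod 2)) ≤
        r₁ * b₂ := by
      rw [(Submodule.Quotient.restrictScalarsEquiv (ZMod 2) C₁).finrank_eq,
        ← finrank_mul_finrank (ZMod 2) (GaloisField 2 b₂), Submodule.finrank_quotient, hC₁,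
        finrank_fin_fun, hK, mul_comm]
      exact Nat.mul_le_mul_right b₂ (by omega)
    have hq₂ : finrank (ZMod 2) ((Fin nL → ZMod 2) ⧸ C₂) ≤ r - b₁ * b₂ + 1 := by
      rw [Submodule.finrank_quotient, hC₂, finrank_fin_fun]
      omega
    simp only [finrank_pi_fintype, finrank_self, sum_const, card_univ, Fintype.card_fin,
      smul_eq_mul, mul_one] at hdim
    omega
  · exact eq_of_sub_mem_comap_compressRows_inf_comap_foldColumns (by omega) (by omega)
      (Nat.mul_div_le nL b₁) B hcorr hloc h₁ h₂ hmem

/-- Given an optimum `b₁`-burst-correcting code over `GF(2^{b₂})` of length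
`n₁ = (q^{r₁-b₁+1}-1)/(q-1)` and redundancy `r₁`, and a binary `(b₁b₂)`-burst-locator
code of length `n_L = 2^{r-b₁b₂+1}-1` and redundancy `r - b₁b₂ + 1`, there exists a
binary linear `(b₁ × b₂)`-cluster-correcting code of size `n₁ × n₂`, with
`n₂ = ⌊n_L/b₁⌋`, and redundancy at most `r₁b₂ + r - b₁b₂ + 2`. -/
theorem stmt16 (b₁ b₂ r₁ r : ℕ) (hb₁ : 2 ≤ b₁) (hb₂ : 2 ≤ b₂)
    (hodd : Odd (b₁ * b₂)) (hr₁ : b₁ ≤ r₁) (hr : b₁ * b₂ < r) :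
    ∀ n₁ nL n₂ : ℕ,
      n₁ = ((2 ^ b₂) ^ (r₁ - b₁ + 1) - 1) / (2 ^ b₂ - 1) →
      nL = 2 ^ (r - b₁ * b₂ + 1) - 1 →
      n₂ = nL / b₁ →
      (∃ C₁ : Submodule (GaloisField 2 b₂) (Fin n₁ → GaloisField 2 b₂),
        Module.finrank (GaloisField 2 b₂) C₁ = n₁ - r₁ ∧
        ∀ u v : Fin n₁ → GaloisField 2 b₂, u ≠ v →
          (∃ i : ℕ, ∀ j : Fin n₁, u j ≠ 0 → i ≤ (j : ℕ) ∧ (j : ℕ) < i + b₁) →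
          (∃ i : ℕ, ∀ j : Fin n₁, v j ≠ 0 → i ≤ (j : ℕ) ∧ (j : ℕ) < i + b₁) →
          u - v ∉ C₁) →
      (∃ C₂ : Submodule (ZMod 2) (Fin nL → ZMod 2),
        Module.finrank (ZMod 2) C₂ = nL - (r - b₁ * b₂ + 1) ∧
        ∀ (e : ℕ → ZMod 2) (i j : ℕ), i ≤ nL - b₁ * b₂ → j ≤ nL - b₁ * b₂ →
          place nL (b₁ * b₂) i e ≠ place nL (b₁ * b₂) j e →
          place nL (b₁ * b₂) i e - place nL (b₁ * b₂) j e ∉ C₂) →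
      ∃ C : Submodule (ZMod 2) (Fin n₁ → Fin n₂ → ZMod 2),
        n₁ * n₂ - (r₁ * b₂ + r - b₁ * b₂ + 2) ≤ Module.finrank (ZMod 2) C ∧
        ∀ E₁ E₂ : Fin n₁ → Fin n₂ → ZMod 2, E₁ ≠ E₂ →
          (∃ i₀ j₀ : ℕ, ∀ (i : Fin n₁) (j : Fin n₂), E₁ i j ≠ 0 →
            (i₀ ≤ (i : ℕ) ∧ (i : ℕ) < i₀ + b₁) ∧ (j₀ ≤ (j : ℕ) ∧ (j : ℕ) < j₀ + b₂)) →
          (∃ i₀ j₀ : ℕ, ∀ (i : Fin n₁) (j : Fin n₂), E₂ i j ≠ 0 →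
            (i₀ ≤ (i : ℕ) ∧ (i : ℕ) < i₀ + b₁) ∧ (j₀ ≤ (j : ℕ) ∧ (j : ℕ) < j₀ + b₂)) →
          E₁ - E₂ ∉ C :=
  stmt16_general b₁ b₂ r₁ r hb₁ hb₂ hr
end

section
/- Let D ≥ 2 and b_1, ..., b_D ≥ 2 be integers, and set B = b_1 b_2 ··· b_D. Let r_1 ≥ b_1 + 1 be an integer and let m_2, ..., m_D be integers with m_j > B for every 2 ≤ j ≤ D. Set q = 2^{B/b_1}, n_1 = (q^{r_1 - b_1 + 1} - 1)/(q - 1), and n_j = ⌊(2^{m_j} - 1)/(B/b_j)⌋ for 2 ≤ j ≤ D. Then log_2(n_1 · n_2 ··· n_D) ≥ (B/b_1)·r_1 - B + Σ_{j=2}^{D} m_j - log_2(B^{D-2}·b_1) - 1. -/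
/-!
The first factor is a geometric sum, `n₁ = 1 + q + ⋯ + q^(r₁-b₁) ≥ q^(r₁-b₁) = 2^((B/b₁)·r₁ - B)`.
For `j ≥ 2` the floor costs at most one: with `k_j = B/b_j ≤ B/2` and `m_j > B`,
`n_j ≥ 2^(m_j)/k_j - 1 ≥ (2^(m_j)/k_j)(1 - ε)` for `ε = B/2^(B+2)`. Since `2^D ≤ B` there are fewer
than `B` such factors, and Bernoulli's inequality gives `(1 - ε)^(D-1) ≥ 1 - B²/2^(B+2) ≥ 1/2`,
which is the final `-1`. Finally `∏_{j≥2} k_j = B^(D-1)/(b₂⋯b_D) = B^(D-2)·b₁`.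
-/

open Finset

theorem Nat.sq_le_two_pow_succ (n : ℕ) : n ^ 2 ≤ 2 ^ (n + 1) := by
  induction n with
  | zero => norm_num
  | succ n ih =>
    have := n.lt_two_pow_self
    rw [pow_succ 2 (n + 1), pow_succ 2 n] at *
    nlinarith

theorem Nat.pow_le_geomSum_div {q : ℕ} (hq : 2 ≤ q) (s : ℕ) :
    q ^ s ≤ (q ^ (s + 1) - 1) / (q - 1) := by
  rw [← Nat.geomSum_eq hq]
  exact single_le_sum (fun _ _ ↦ Nat.zero_le _) (self_mem_range_succ s)

theorem Nat.cast_div_sub_one_le_cast_sub_one_div (N k : ℕ) :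
    (N : ℝ) / k - 1 ≤ ((N - 1) / k : ℕ) := by
  rcases Nat.eq_zero_or_pos k with rfl | hk
  · simp
  have hlt := Nat.lt_div_mul_add (a := N - 1) hk
  have hN : N ≤ ((N - 1) / k + 1) * k := by rw [add_one_mul]; omega
  rw [sub_le_iff_le_add, div_le_iff₀ (by exact_mod_cast hk)]
  exact_mod_cast hN

theorem div_mul_one_sub_le_sub_one_div {N k : ℕ} {ε : ℝ} (hk : 0 < k) (hε : (k : ℝ) ≤ N * ε) :
    (N : ℝ) / k * (1 - ε) ≤ ((N - 1) / k : ℕ) := by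
  refine le_trans ?_ (Nat.cast_div_sub_one_le_cast_sub_one_div N k)
  have hk' : (0 : ℝ) < k := by exact_mod_cast hk
  rw [mul_one_sub, sub_le_sub_iff_left, div_mul_eq_mul_div, le_div_iff₀ hk', one_mul]
  exact hε

theorem Finset.card_le_prod_of_two_le {ι : Type*} {s : Finset ι} {b : ι → ℕ}
    (hb : ∀ j ∈ s, 2 ≤ b j) : #s ≤ ∏ j ∈ s, b j :=
  (#s).lt_two_pow_self.le.trans (pow_card_le_prod s b 2 hb)

theorem Finset.prod_mul_prod_div_eq_pow_mul {ι : Type*} {s : Finset ι} {b : ι → ℕ} (c : ℕ)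
    (hs : s.Nonempty) (hb : ∀ j ∈ s, 0 < b j) :
    ∏ j ∈ s, (c * ∏ i ∈ s, b i) / b j = (c * ∏ i ∈ s, b i) ^ (#s - 1) * c := by
  set P := ∏ i ∈ s, b i
  have hP : 0 < P := prod_pos hb
  refine Nat.eq_of_mul_eq_mul_right hP ?_
  calc (∏ j ∈ s, c * P / b j) * P = ∏ j ∈ s, c * P / b j * b j := by rw [prod_mul_distrib]
    _ = (c * P) ^ #s := by
      rw [← prod_const]
      exact prod_congr rfl fun j hj ↦ Nat.div_mul_cancel ((dvd_prod_of_mem b hj).mul_left c)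
    _ = (c * P) ^ (#s - 1) * c * P := by
      rw [mul_assoc _ c, ← pow_succ, Nat.sub_add_cancel hs.card_pos]

theorem Nat.div_pos_and_two_mul_div_le {B b : ℕ} (hB : 0 < B) (hdvd : b ∣ B) (hb : 2 ≤ b) :
    0 < B / b ∧ 2 * (B / b) ≤ B :=
  ⟨Nat.div_pos (Nat.le_of_dvd hB hdvd) (by omega),
    (Nat.mul_le_mul_right _ hb).trans (Nat.mul_div_cancel' hdvd).le⟩

theorem two_pow_sum_div_le_prod {ι : Type*} {s : Finset ι} {B : ℕ} {k m : ι → ℕ}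
    (hcard : #s ≤ B) (hk : ∀ j ∈ s, 0 < k j ∧ 2 * k j ≤ B) (hm : ∀ j ∈ s, B < m j) :
    (2 : ℝ) ^ (∑ j ∈ s, m j) / (2 * ∏ j ∈ s, (k j : ℝ))
      ≤ ∏ j ∈ s, (((2 ^ m j - 1) / k j : ℕ) : ℝ) := by
  set ε : ℝ := B / 2 ^ (B + 2)
  have hε : #s * ε ≤ 1 / 2 := by
    have hsq : ((B : ℝ) ^ 2) ≤ 2 ^ (B + 1) := by exact_mod_cast Nat.sq_le_two_pow_succ B
    have hcard' : (#s : ℝ) ≤ B := by exact_mod_cast hcard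
    simp only [ε, pow_succ] at hsq ⊢
    rw [mul_div_assoc', div_le_div_iff₀ (by positivity) (by norm_num)]
    nlinarith [show (0:ℝ) ≤ B from B.cast_nonneg]
  have hε1 : ε ≤ 1 := by
    have : (B : ℝ) < 2 ^ B := by exact_mod_cast B.lt_two_pow_self
    rw [div_le_one (by positivity), pow_add]
    nlinarith [pow_pos (two_pos (α := ℝ)) B]
  have hbernoulli : 1 / 2 ≤ (1 - ε) ^ #s := by
    have := one_add_mul_sub_le_pow (a := 1 - ε) (by linarith) #s
    linarith
  have hfactor : ∀ j ∈ s, (2 : ℝ) ^ m j / k j * (1 - ε) ≤ (((2 ^ m j - 1) / k j : ℕ) : ℝ) := by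
    intro j hj
    obtain ⟨hkpos, hkB⟩ := hk j hj
    have hkε : (k j : ℝ) ≤ (2 ^ m j : ℕ) * ε := by
      have h2m : (2 : ℝ) ^ (B + 1) ≤ 2 ^ m j := pow_le_pow_right₀ (by norm_num) (hm j hj)
      have hkB' : (2 * k j : ℝ) ≤ B := by exact_mod_cast hkB
      push_cast
      simp only [ε, pow_succ] at h2m ⊢
      rw [mul_div_assoc', le_div_iff₀ (by positivity)]
      nlinarith [mul_le_mul h2m hkB' (by positivity) (by positivity)]
    exact_mod_cast div_mul_one_sub_le_sub_one_div hkpos hkε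
  calc (2 : ℝ) ^ (∑ j ∈ s, m j) / (2 * ∏ j ∈ s, (k j : ℝ))
      ≤ (∏ j ∈ s, (2 : ℝ) ^ m j / k j) * (1 - ε) ^ #s := by
        rw [prod_div_distrib, prod_pow_eq_pow_sum, mul_comm 2, ← div_div, div_eq_mul_one_div _ 2]
        gcongr
    _ = ∏ j ∈ s, (2 : ℝ) ^ m j / k j * (1 - ε) := by rw [prod_mul_distrib, prod_const]
    _ ≤ _ := prod_le_prod (fun j _ ↦ mul_nonneg (by positivity) (by linarith)) hfactor

section BoxCode

variable {D B : ℕ} {b : ℕ → ℕ}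

theorem div_pos_and_two_mul_div_le_of_prod (hb : ∀ j < D, 2 ≤ b j)
    (hB : B = ∏ j ∈ range D, b j) {j : ℕ} (hj : j < D) : 0 < B / b j ∧ 2 * (B / b j) ≤ B := by
  have hBpos : 0 < B := hB ▸ prod_pos fun i hi ↦ by have := hb i (mem_range.1 hi); omega
  exact Nat.div_pos_and_two_mul_div_le hBpos (hB ▸ dvd_prod_of_mem b (mem_range.2 hj)) (hb j hj)

theorem prod_Ico_div_eq_pow_mul (hD : 2 ≤ D) (hb : ∀ j < D, 0 < b j)
    (hB : B = ∏ j ∈ range D, b j) : ∏ j ∈ Ico 1 D, B / b j = B ^ (D - 2) * b 0 := by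
  rw [prod_range_eq_mul_Ico b (by omega)] at hB
  rw [hB, prod_mul_prod_div_eq_pow_mul _ (nonempty_Ico.2 (by omega))
    fun j hj ↦ hb j (mem_Ico.1 hj).2, Nat.card_Ico, Nat.sub_sub]

theorem two_pow_sum_div_le_prod_Ico {m : ℕ → ℕ} (hD : 2 ≤ D) (hb : ∀ j < D, 2 ≤ b j)
    (hB : B = ∏ j ∈ range D, b j) (hm : ∀ j ∈ Ico 1 D, B < m j) :
    (2 : ℝ) ^ (∑ j ∈ Ico 1 D, m j) / (2 * ((B : ℝ) ^ (D - 2) * b 0))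
      ≤ ∏ j ∈ Ico 1 D, (((2 ^ m j - 1) / (B / b j) : ℕ) : ℝ) := by
  have hcard : #(Ico 1 D) ≤ B := by
    have := hB ▸ card_le_prod_of_two_le (s := range D) fun j hj ↦ hb j (mem_range.1 hj)
    rw [card_range] at this
    rw [Nat.card_Ico]
    omega
  have hk := two_pow_sum_div_le_prod (k := fun j ↦ B / b j) hcard
    (fun j hj ↦ div_pos_and_two_mul_div_le_of_prod hb hB (mem_Ico.1 hj).2) hm
  rwa [← Nat.cast_prod, prod_Ico_div_eq_pow_mul hD (fun j hj ↦ by have := hb j hj; omega) hB,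
    Nat.cast_mul, Nat.cast_pow] at hk

end BoxCode

/-- The redundancy computation for the D-dimensional box-error construction:
with `B = b₁⋯b_D`, `q = 2^(B/b₁)`, `n₁ = (q^(r₁-b₁+1)-1)/(q-1)` and
`n_j = ⌊(2^(m_j)-1)/(B/b_j)⌋` for `2 ≤ j ≤ D` (here `0`-indexed: `b 0 = b₁`, etc.),
one has `log₂(n₁⋯n_D) ≥ (B/b₁)·r₁ - B + Σ_{j=2}^{D} m_j - log₂(B^(D-2)·b₁) - 1`. -/
theorem stmt17 (D : ℕ) (hD : 2 ≤ D) (b : ℕ → ℕ) (hb : ∀ j < D, 2 ≤ b j)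
    (B : ℕ) (hB : B = ∏ j ∈ Finset.range D, b j)
    (r₁ : ℕ) (hr₁ : b 0 + 1 ≤ r₁)
    (m : ℕ → ℕ) (hm : ∀ j, 1 ≤ j → j < D → B < m j)
    (q : ℕ) (hq : q = 2 ^ (B / b 0))
    (n : ℕ → ℕ)
    (hn0 : n 0 = (q ^ (r₁ - b 0 + 1) - 1) / (q - 1))
    (hnj : ∀ j, 1 ≤ j → j < D → n j = (2 ^ m j - 1) / (B / b j)) :
    ((B / b 0 : ℕ) : ℝ) * (r₁ : ℝ) - (B : ℝ) + (∑ j ∈ Finset.Ico 1 D, (m j : ℝ))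
        - Real.logb 2 ((B : ℝ) ^ (D - 2) * ((b 0 : ℕ) : ℝ)) - 1
      ≤ Real.logb 2 (∏ j ∈ Finset.range D, ((n j : ℕ) : ℝ)) := by
  set a := B / b 0
  have hab : a * b 0 = B := Nat.div_mul_cancel (hB ▸ dvd_prod_of_mem b (mem_range.2 (by omega)))
  obtain ⟨ha, h2a⟩ := div_pos_and_two_mul_div_le_of_prod hb hB (by omega : 0 < D)
  have hn0_ge : (2 : ℝ) ^ (a * (r₁ - b 0)) ≤ n 0 := by
    subst hq
    rw [pow_mul, hn0]
    exact_mod_cast Nat.pow_le_geomSum_div (Nat.le_self_pow ha.ne' 2) (r₁ - b 0)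
  have hrest := two_pow_sum_div_le_prod_Ico hD hb hB fun j hj ↦
    hm j (mem_Ico.1 hj).1 (mem_Ico.1 hj).2
  rw [← prod_congr rfl fun j hj ↦ congrArg _ (hnj j (mem_Ico.1 hj).1 (mem_Ico.1 hj).2)] at hrest
  set d : ℝ := (B : ℝ) ^ (D - 2) * b 0
  have hd : 0 < d := by
    have : 0 < b 0 := by have := hb 0 (by omega); omega
    have : 0 < B := by omega
    positivity
  calc _ = Real.logb 2 (2 ^ (a * (r₁ - b 0)) * (2 ^ (∑ j ∈ Ico 1 D, m j) / (2 * d))) := by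
        symm
        rw [Real.logb_mul (by positivity) (by positivity),
          Real.logb_div (by positivity) (by positivity), Real.logb_mul (by norm_num) hd.ne',
          Real.logb_pow, Real.logb_pow, Real.logb_self_eq_one (by norm_num)]
        push_cast [Nat.cast_sub (show b 0 ≤ r₁ by omega)]
        have hab' : (a : ℝ) * b 0 = B := by exact_mod_cast hab
        linear_combination -hab'
    _ ≤ _ := by
      rw [prod_range_eq_mul_Ico _ (by omega)]
      gcongr
      norm_num
end
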